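/- arXiv:1401.0157 — 9 statements merged into one kernel-verified Lean document; each statement's English description precedes it below -/
import Mathlib

section
/- For every n ≥ 1, the submonoid of the monoid of all transformations of Q_n = {0,…,n−1} (under composition) generated by the unitary transformations (q→q+1) for 0 ≤ q ≤ n−2 and (q→q−1) for 1 ≤ q ≤ n−1, together with the identity, is equal to the set of all monotone transformations of Q_n (i.e., all t with p ≤ q implying t(p) ≤ t(q)). -/
/-!
A monotone `f ≠ id` misses a value `p` adjacent to a value `q = f x` with `x` on `p`'s side of `q`:
take `x` least with `x < f x` and `p = f x - 1`, or dually `x` greatest with `f x < x`. Sending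
the points of the fibre of `q` on `p`'s side to `p` gives a monotone `f'` with `f = (p→q) ∘ f'`
and smaller total displacement `∑ x, |f x - x|`, so induction on the displacement writes every
monotone map as a product of generators.
-/

/-- The unitary transformation `(p→q)`: sends `p` to `q` and fixes every other element. -/
def unitaryT {Q : Type*} [DecidableEq Q] (p q : Q) : Function.End Q :=
  fun r => if r = p then q else r

def Function.End.monotoneSubmonoid (α : Type*) [Preorder α] : Submonoid (Function.End α) where
  carrier := {f | Monotone f}
  one_mem' := monotone_id
  mul_mem' hf hg := hf.comp hg

theorem monotone_unitaryT {α : Type*} [LinearOrder α] {p q : α} (h : p ⋖ q ∨ q ⋖ p) :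
    Monotone (unitaryT p q) := by
  intro x y hxy
  simp only [unitaryT]
  split_ifs with hx hy hy
  · exact le_rfl
  · subst hx
    rcases h with h | h
    · exact h.ge_of_gt (lt_of_le_of_ne hxy (Ne.symm hy))
    · exact h.lt.le.trans hxy
  · subst hy
    rcases h with h | h
    · exact hxy.trans h.lt.le
    · exact h.le_of_lt (lt_of_le_of_ne hxy hx)
  · exact hxy

theorem Fin.covBy_iff_val_add_one_eq {n : ℕ} {a b : Fin n} : a ⋖ b ↔ (a : ℕ) + 1 = b := by
  rw [Fin.covBy_iff, Nat.covBy_iff_add_one_eq]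

namespace MonotoneTransformation

def adjacentUnitaries (n : ℕ) : Set (Function.End (Fin n)) :=
  {f | ∃ p q : Fin n, ((q : ℕ) = (p : ℕ) + 1 ∨ (p : ℕ) = (q : ℕ) + 1) ∧ f = unitaryT p q}

variable {n : ℕ}

def displacement (f : Fin n → Fin n) : ℕ :=
  ∑ x : Fin n, Nat.dist x (f x)

def pullFibre (f : Function.End (Fin n)) (p q : Fin n) : Function.End (Fin n) :=
  fun x => if f x = q ∧ Nat.dist x p < Nat.dist x q then p else f x

theorem unitaryT_mul_pullFibre {f : Function.End (Fin n)} {p : Fin n} (hp : p ∉ Set.range f)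
    (q : Fin n) : unitaryT p q * pullFibre f p q = f := by
  funext x
  show unitaryT p q (pullFibre f p q x) = f x
  simp only [pullFibre, unitaryT]
  split_ifs with hmove _ hfx
  · exact hmove.1.symm
  · contradiction
  · exact absurd ⟨x, hfx⟩ hp
  · rfl

theorem monotone_pullFibre {f : Function.End (Fin n)} (hf : Monotone f) {p q : Fin n}
    (hpq : (q : ℕ) = p + 1 ∨ (p : ℕ) = q + 1) : Monotone (pullFibre f p q) := by
  intro x y hxy
  have hfxy := hf hxy
  simp only [pullFibre, Nat.dist, Fin.ext_iff] at *
  split_ifs <;> omega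

theorem displacement_pullFibre_lt {f : Function.End (Fin n)} {p q x : Fin n} (hx : f x = q)
    (hxp : Nat.dist x p < Nat.dist x q) : displacement (pullFibre f p q) < displacement f := by
  refine Finset.sum_lt_sum (fun y _ => ?_) ⟨x, Finset.mem_univ x, ?_⟩
  · simp only [pullFibre]
    split_ifs with hmove
    · exact hmove.1 ▸ hmove.2.le
    · exact le_rfl
  · simp [pullFibre, hx, hxp]

theorem exists_gap_above {f : Fin n → Fin n} (hf : Monotone f) {i : Fin n} (hi : i < f i) :
    ∃ p x : Fin n, (f x : ℕ) = p + 1 ∧ p ∉ Set.range f ∧ x ≤ p := by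
  obtain ⟨x, hx, hmin⟩ := wellFounded_lt.has_min {j | j < f j} ⟨i, hi⟩
  have hx : x < f x := hx
  refine ⟨⟨f x - 1, by omega⟩, x, by simp only; omega, ?_, Fin.le_def.2 (by simp only; omega)⟩
  rintro ⟨y, hy⟩
  rcases lt_or_ge y x with hyx | hxy
  · have : f y ≤ y := not_lt.1 fun h => hmin y h hyx
    simp only [Fin.ext_iff] at hy
    omega
  · have := hf hxy
    simp only [Fin.ext_iff] at hy
    omega

theorem exists_gap_below {f : Fin n → Fin n} (hf : Monotone f) {i : Fin n} (hi : f i < i) :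
    ∃ p x : Fin n, (p : ℕ) = f x + 1 ∧ p ∉ Set.range f ∧ p ≤ x := by
  obtain ⟨p, x, hpx, hp, hxp⟩ := exists_gap_above (f := Fin.rev ∘ f ∘ Fin.rev)
    (fun a b h => Fin.rev_le_rev.2 (hf (Fin.rev_le_rev.2 h))) (i := i.rev)
    (by simpa [Fin.rev_lt_rev] using hi)
  refine ⟨p.rev, x.rev, ?_, ?_, Fin.rev_le_rev.2 hxp⟩
  · simp only [Function.comp_apply, Fin.val_rev] at hpx ⊢
    omega
  · rintro ⟨y, hy⟩
    exact hp ⟨y.rev, by simp [hy]⟩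

theorem exists_adjacent_gap {f : Function.End (Fin n)} (hf : Monotone f) (hf1 : f ≠ 1) :
    ∃ p x : Fin n, ((f x : ℕ) = p + 1 ∨ (p : ℕ) = f x + 1) ∧ p ∉ Set.range f ∧
      Nat.dist x p < Nat.dist x (f x) := by
  obtain ⟨i, hi⟩ : ∃ i, f i ≠ i := by
    by_contra! h
    exact hf1 (funext h)
  rcases hi.lt_or_gt with hi | hi
  · obtain ⟨p, x, hpx, hp, hpx'⟩ := exists_gap_below hf hi
    exact ⟨p, x, .inr hpx, hp, by simp only [Nat.dist]; omega⟩
  · obtain ⟨p, x, hpx, hp, hxp⟩ := exists_gap_above hf hi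
    exact ⟨p, x, .inl hpx, hp, by simp only [Nat.dist]; omega⟩

theorem mem_closure_adjacentUnitaries {f : Function.End (Fin n)} (hf : Monotone f) :
    f ∈ Submonoid.closure (adjacentUnitaries n) := by
  induction hd : displacement f using Nat.strong_induction_on generalizing f with
  | _ d ih =>
  by_cases hf1 : f = 1
  · exact hf1 ▸ one_mem _
  obtain ⟨p, x, hadj, hp, hxp⟩ := exists_adjacent_gap hf hf1
  rw [← unitaryT_mul_pullFibre hp (f x)]
  refine mul_mem (Submonoid.subset_closure ⟨p, f x, hadj, rfl⟩)
    (ih _ ?_ (monotone_pullFibre hf hadj) rfl)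
  exact hd ▸ displacement_pullFibre_lt rfl hxp

end MonotoneTransformation

theorem statement0_general (n : ℕ) :
    (Submonoid.closure
        {f : Function.End (Fin n) |
          ∃ p q : Fin n, ((q : ℕ) = (p : ℕ) + 1 ∨ (p : ℕ) = (q : ℕ) + 1) ∧ f = unitaryT p q} :
        Set (Function.End (Fin n)))
      = {f : Function.End (Fin n) | Monotone f} := by
  apply Set.Subset.antisymm
  · refine Submonoid.closure_le (S := Function.End.monotoneSubmonoid (Fin n)) |>.2 ?_
    rintro _ ⟨p, q, hpq, rfl⟩
    exact monotone_unitaryT (by simp only [Fin.covBy_iff_val_add_one_eq]; omega)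
  · exact fun _ => MonotoneTransformation.mem_closure_adjacentUnitaries

/-- For every `n ≥ 1`, the submonoid of the monoid of transformations of
`Q_n = {0,…,n−1}` generated by the unitary transformations `(q→q+1)` for
`0 ≤ q ≤ n−2` and `(q→q−1)` for `1 ≤ q ≤ n−1`, together with the identity,
equals the set of all monotone transformations of `Q_n`. -/
theorem statement0 (n : ℕ) (hn : 1 ≤ n) :
    (Submonoid.closure
        {f : Function.End (Fin n) |
          ∃ p q : Fin n, ((q : ℕ) = (p : ℕ) + 1 ∨ (p : ℕ) = (q : ℕ) + 1) ∧ f = unitaryT p q} :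
        Set (Function.End (Fin n)))
      = {f : Function.End (Fin n) | Monotone f} :=
  statement0_general n
end

section
/- For every n ≥ 2, the number of partially monotonic transformations of Q_n = {0,…,n−1} equals e(n) = Σ_{k=0}^{n−1} C(n−1, k)·C(n+k−2, k), where C denotes the binomial coefficient. Here a transformation t of Q_n is partially monotonic if t(n−1) = n−1 and for all p ≤ q with p, q < n−1, if t(p) < n−1 and t(q) < n−1 then t(p) ≤ t(q). -/
/-!
The value `n - 1` plays the role of "undefined", so a partially monotonic transformation of
`Q_{m+2}` is a partial map of `Q_{m+1}` into itself that is monotone on its domain `S`.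
Listing `S` in increasing order, the restriction to `S` is a monotone `|S|`-tuple in `Q_{m+1}`,
i.e. (after sorting) a multiset of size `k = |S|`; there are `C(m + k, k)` of these, and
`C(m + 1, k)` possible domains of size `k`.
-/

/-- A transformation `t` of `Q_n = {0,…,n−1}` is partially monotonic if
`t(n−1) = n−1` and for all `p ≤ q` with `p, q < n−1`, if `t(p) < n−1` and
`t(q) < n−1` then `t(p) ≤ t(q)`. -/
def PartiallyMonotonic {n : ℕ} (f : Fin n → Fin n) : Prop :=
  (∀ q : Fin n, (q : ℕ) = n - 1 → f q = q) ∧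
  ∀ p q : Fin n, p ≤ q → (p : ℕ) < n - 1 → (q : ℕ) < n - 1 →
    (f p : ℕ) < n - 1 → (f q : ℕ) < n - 1 → f p ≤ f q

def orderHomFinEquivSym (β : Type*) [LinearOrder β] (k : ℕ) : (Fin k →o β) ≃ Sym β k where
  toFun f := ⟨List.ofFn f, by simp⟩
  invFun s := ⟨fun i => (s.1.sort (· ≤ ·)).get (i.cast (by simp)), fun i j hij =>
    (List.sortedLE_iff_pairwise.2 (Multiset.pairwise_sort _ _)).monotone_get
      (Fin.cast_le_cast _ |>.2 hij)⟩
  left_inv f := by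
    ext i
    simp [List.mergeSort_eq_self _ (List.sortedLE_iff_pairwise.1 f.monotone.sortedLE_ofFn)]
    rfl
  right_inv s := by
    ext1
    refine .trans ?_ (Multiset.sort_eq (s : Multiset β) (· ≤ ·))
    exact congrArg _ (List.ext_getElem (by simp) fun _ _ _ => by simp; rfl)

theorem Nat.card_orderHom_fin (β : Type*) [LinearOrder β] (k : ℕ) :
    Nat.card (Fin k →o β) = (Nat.card β + k - 1).choose k := by
  rw [Nat.card_congr (orderHomFinEquivSym β k), Sym.natCard_sym_eq_choose]

theorem Nat.card_orderHom (α β : Type*) [LinearOrder α] [Fintype α] [LinearOrder β] :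
    Nat.card (α →o β) = (Nat.card β + Fintype.card α - 1).choose (Fintype.card α) := by
  rw [← Nat.card_orderHom_fin]
  exact Nat.card_congr
    (OrderIso.arrowCongr (Fintype.orderIsoFinOfCardEq α rfl).symm (.refl β)).toEquiv

section PartialMonotone

variable {α β : Type*}

def IsPartialMonotone [Preorder α] [Preorder β] (g : α → Option β) : Prop :=
  ∀ ⦃a b x y⦄, a ≤ b → g a = some x → g b = some y → x ≤ y

def partialDomain [Fintype α] (g : α → Option β) : Finset α :=
  Finset.univ.filter fun a => (g a).isSome

lemma mem_partialDomain [Fintype α] {g : α → Option β} {a : α} :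
    a ∈ partialDomain g ↔ (g a).isSome := by
  simp [partialDomain]

def isPartialMonotoneFiberEquiv [Preorder α] [Fintype α] [DecidableEq α] [Preorder β]
    (S : Finset α) :
    {g : {g : α → Option β // IsPartialMonotone g} // partialDomain g.1 = S} ≃ (S →o β) where
  toFun g := ⟨fun a => (g.1.1 a).get (by rw [← mem_partialDomain, g.2]; exact a.2),
    fun _ _ hab => g.1.2 hab (Option.some_get _).symm (Option.some_get _).symm⟩
  invFun h := ⟨⟨fun a => if ha : a ∈ S then some (h ⟨a, ha⟩) else none, by
      intro a b x y hab hx hy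
      simp only [Option.dite_none_right_eq_some, Option.some_inj] at hx hy
      obtain ⟨ha, rfl⟩ := hx
      obtain ⟨hb, rfl⟩ := hy
      exact h.monotone (Subtype.mk_le_mk.2 hab)⟩, by
    ext a
    by_cases ha : a ∈ S <;> simp [mem_partialDomain, ha]⟩
  left_inv g := by
    ext1; ext1; funext a
    dsimp only
    split_ifs with ha
    · exact Option.some_get _
    · rw [eq_comm, ← Option.not_isSome_iff_eq_none, ← mem_partialDomain, g.2]
      exact ha
  right_inv h := by ext a; simp

theorem Nat.card_isPartialMonotone [LinearOrder α] [Fintype α] [LinearOrder β] [Finite β] :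
    Nat.card {g : α → Option β // IsPartialMonotone g} =
      ∑ k ∈ Finset.range (Fintype.card α + 1),
        (Fintype.card α).choose k * (Nat.card β + k - 1).choose k := by
  rw [← Nat.card_congr (Equiv.sigmaFiberEquiv fun g : {g : α → Option β // IsPartialMonotone g} =>
    partialDomain g.1), Nat.card_sigma]
  simp only [Nat.card_congr (isPartialMonotoneFiberEquiv _), Nat.card_orderHom, Fintype.card_coe]
  rw [← Finset.powerset_univ,
    Finset.sum_powerset_apply_card fun k => (Nat.card β + k - 1).choose k, Finset.card_univ]
  simp_rw [smul_eq_mul]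

end PartialMonotone

lemma Fin.val_lt_iff_exists_castSucc {n : ℕ} (x : Fin (n + 1)) :
    (x : ℕ) < n ↔ ∃ y : Fin n, x = y.castSucc :=
  ⟨fun h => ⟨x.castLT h, rfl⟩, by rintro ⟨y, rfl⟩; simp⟩

lemma partiallyMonotonic_iff {n : ℕ} {f : Fin (n + 1) → Fin (n + 1)} :
    PartiallyMonotonic f ↔ f (Fin.last n) = Fin.last n ∧
      IsPartialMonotone fun p : Fin n => finSuccEquivLast (f p.castSucc) := by
  simp only [PartiallyMonotonic, IsPartialMonotone, add_tsub_cancel_right,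
    Fin.val_lt_iff_exists_castSucc, ← Equiv.eq_symm_apply, finSuccEquivLast_symm_some]
  refine and_congr ⟨fun h => h _ rfl, fun h q hq => ?_⟩ ⟨?_, ?_⟩
  · rwa [show q = Fin.last n from Fin.ext hq]
  · intro h a b x y hab hx hy
    simpa [hx, hy] using
      h _ _ (Fin.castSucc_le_castSucc_iff.2 hab) ⟨a, rfl⟩ ⟨b, rfl⟩ ⟨x, hx⟩ ⟨y, hy⟩
  · rintro h _ _ hpq ⟨a, rfl⟩ ⟨b, rfl⟩ ⟨x, hx⟩ ⟨y, hy⟩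
    simpa [hx, hy] using h (Fin.castSucc_le_castSucc_iff.1 hpq) hx hy

def partiallyMonotonicEquiv (n : ℕ) :
    {f : Fin (n + 1) → Fin (n + 1) // PartiallyMonotonic f} ≃
      {g : Fin n → Option (Fin n) // IsPartialMonotone g} where
  toFun f := ⟨_, (partiallyMonotonic_iff.1 f.2).2⟩
  invFun g := ⟨Fin.lastCases (Fin.last n) fun p => finSuccEquivLast.symm (g.1 p),
    partiallyMonotonic_iff.2 ⟨by simp, by simpa using g.2⟩⟩
  left_inv f := by
    ext1; funext q
    induction q using Fin.lastCases with
    | last => simp [(partiallyMonotonic_iff.1 f.2).1]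
    | cast p => simp
  right_inv g := by ext1; simp

/-- For every `n ≥ 2`, the number of partially monotonic transformations of
`Q_n = {0,…,n−1}` equals `e(n) = Σ_{k=0}^{n−1} C(n−1, k)·C(n+k−2, k)`. -/
theorem statement4 (n : ℕ) (hn : 2 ≤ n) :
    Set.ncard {f : Fin n → Fin n | PartiallyMonotonic f} =
      ∑ k ∈ Finset.range n, Nat.choose (n - 1) k * Nat.choose (n + k - 2) k := by
  obtain ⟨m, rfl⟩ : ∃ m, n = m + 2 := ⟨n - 2, by omega⟩
  rw [← Nat.card_coe_set_eq, Set.coe_ofPred, Nat.card_congr (partiallyMonotonicEquiv (m + 1)),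
    Nat.card_isPartialMonotone, Fintype.card_fin, Nat.card_fin]
  exact Finset.sum_congr rfl fun k _ => by congr 2; omega
end

section
/- For every n ≥ 1, the submonoid of the monoid of transformations of Q_n = {0,…,n−1} generated by the unitary transformations (q→p) for all 0 ≤ q < p ≤ n−1, together with the identity, is equal to the set of all non-decreasing transformations of Q_n, i.e., all t with q ≤ t(q) for every q ∈ Q_n; moreover this set has cardinality n!. -/
open Finset

section Extensive

variable {Q : Type*}

theorem unitaryT_self [DecidableEq Q] (p : Q) : unitaryT p p = 1 := by
  funext r
  change (if r = p then p else r) = r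
  split_ifs with h
  exacts [h.symm, rfl]

def extensiveSubmonoid (Q : Type*) [Preorder Q] : Submonoid (Function.End Q) where
  carrier := {f | ∀ q, q ≤ f q}
  one_mem' _ := le_rfl
  mul_mem' hf hg r := (hg r).trans (hf _)

variable [LinearOrder Q]

theorem unitaryT_mem_extensiveSubmonoid {p q : Q} (h : p ≤ q) :
    unitaryT p q ∈ extensiveSubmonoid Q := by
  intro r
  unfold unitaryT
  split_ifs with hr
  · exact hr ▸ h
  · exact le_rfl

theorem closure_unitaryT_le_extensiveSubmonoid :
    Submonoid.closure {f : Function.End Q | ∃ q p : Q, q < p ∧ f = unitaryT q p} ≤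
      extensiveSubmonoid Q :=
  Submonoid.closure_le.2 <| by
    rintro _ ⟨q, p, hqp, rfl⟩
    exact unitaryT_mem_extensiveSubmonoid hqp.le

theorem unitaryT_mem_closure {p q : Q} (h : p ≤ q) :
    unitaryT p q ∈
      Submonoid.closure {f : Function.End Q | ∃ q p : Q, q < p ∧ f = unitaryT q p} := by
  rcases h.eq_or_lt with rfl | h
  · exact unitaryT_self p ▸ one_mem _
  · exact Submonoid.subset_closure ⟨p, q, h, rfl⟩

theorem mem_closure_unitaryT_of_fixes_compl (s : Finset Q) {f : Function.End Q}
    (hf : ∀ q, q ≤ f q) (hfix : ∀ q ∉ s, f q = q) :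
    f ∈ Submonoid.closure {f : Function.End Q | ∃ q p : Q, q < p ∧ f = unitaryT q p} := by
  induction s using Finset.induction_on_min generalizing f with
  | empty =>
    have hf1 : f = 1 := funext fun q => hfix q (notMem_empty q)
    exact hf1 ▸ one_mem _
  | insert a s has ih =>
    set g : Function.End Q := Function.update f a a
    have hga : g a = a := Function.update_self a a f
    have hg : ∀ q, q ≠ a → g q = f q := fun q hq => Function.update_of_ne hq _ _
    have hf_ne : ∀ q, q ≠ a → f q ≠ a := by
      intro q hq
      by_cases hqs : q ∈ s
      · exact ((has q hqs).trans_le (hf q)).ne'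
      · rwa [hfix q (by simp [hq, hqs])]
    have hdecomp : f = unitaryT a (f a) * g := by
      funext q
      change f q = unitaryT a (f a) (g q)
      by_cases hq : q = a
      · simp [unitaryT, hq, hga]
      · simp [unitaryT, hf_ne q hq, hg q hq]
    rw [hdecomp]
    refine mul_mem (unitaryT_mem_closure (hf a)) (ih (fun q => ?_) (fun q hq => ?_))
    · by_cases hq : q = a
      · exact hq ▸ hga.ge
      · exact (hf q).trans_eq (hg q hq).symm
    · by_cases hqa : q = a
      · exact hqa ▸ hga
      · rw [hg q hqa, hfix q (by simp [hqa, hq])]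

theorem coe_closure_unitaryT [Finite Q] :
    (Submonoid.closure {f : Function.End Q | ∃ q p : Q, q < p ∧ f = unitaryT q p} :
        Set (Function.End Q)) = {f | ∀ q, q ≤ f q} :=
  have : Fintype Q := Fintype.ofFinite Q
  Set.Subset.antisymm (fun _ hf => closure_unitaryT_le_extensiveSubmonoid hf)
    fun _ hf =>
      mem_closure_unitaryT_of_fixes_compl univ hf fun q hq => absurd (mem_univ q) hq

end Extensive

theorem ncard_setOf_le_apply {α : Type*} [Fintype α] [Preorder α] [LocallyFiniteOrderTop α] :
    {f : α → α | ∀ a, a ≤ f a}.ncard = ∏ a : α, #(Ici a) := by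
  rw [← Nat.card_coe_set_eq]
  refine (Nat.card_congr Equiv.subtypePiEquivPi).trans ?_
  rw [Nat.card_pi]
  refine Finset.prod_congr rfl fun a _ => ?_
  exact (Nat.card_eq_card_toFinset (Set.Ici a)).trans (by rw [Set.toFinset_Ici])

theorem Fin.prod_univ_sub_val (n : ℕ) : ∏ i : Fin n, (n - (i : ℕ)) = n.factorial := by
  rw [← Finset.prod_range_add_one_eq_factorial, ← Fin.prod_univ_eq_prod_range,
    ← Equiv.prod_comp Fin.revPerm]
  refine Finset.prod_congr rfl fun i _ => ?_
  simp only [Fin.revPerm_apply, Fin.val_rev]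
  omega

theorem statement7_general (n : ℕ) :
    (Submonoid.closure
        {f : Function.End (Fin n) | ∃ q p : Fin n, q < p ∧ f = unitaryT q p} :
        Set (Function.End (Fin n)))
      = {f : Function.End (Fin n) | ∀ q : Fin n, q ≤ f q} ∧
    Set.ncard {f : Function.End (Fin n) | ∀ q : Fin n, q ≤ f q} = Nat.factorial n := by
  refine ⟨coe_closure_unitaryT, ?_⟩
  rw [← Fin.prod_univ_sub_val n]
  simp only [← Fin.card_Ici]
  exact ncard_setOf_le_apply

/-- For every `n ≥ 1`, the submonoid of transformations of `Q_n = {0,…,n−1}`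
generated by the unitary transformations `(q→p)` for `0 ≤ q < p ≤ n−1`, together
with the identity, equals the set of all non-decreasing transformations of `Q_n`;
moreover this set has cardinality `n!`. -/
theorem statement7 (n : ℕ) (hn : 1 ≤ n) :
    (Submonoid.closure
        {f : Function.End (Fin n) | ∃ q p : Fin n, q < p ∧ f = unitaryT q p} :
        Set (Function.End (Fin n)))
      = {f : Function.End (Fin n) | ∀ q : Fin n, q ≤ f q} ∧
    Set.ncard {f : Function.End (Fin n) | ∀ q : Fin n, q ≤ f q} = Nat.factorial n :=
  statement7_general n
end

section
/- Let Q be a finite set and T a set of unitary transformations of Q. If T contains a k-cyclic subset with k ≥ 3, i.e., a subset {(q0→q1), (q1→q2), …, (q_{k−2}→q_{k−1}), (q_{k−1}→q0)} for pairwise distinct elements q0,…,q_{k−1} of Q, then the subsemigroup of transformations generated by T under composition is not aperiodic: it contains an element s such that s^(j+1) ≠ s^j for every j ≥ 1. -/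
open Set

theorem pow_succ_ne_pow_of_mapsTo {M α : Type*} [Monoid M] [MulAction M α] {f : M} {C : Set α}
    (hC : C.Nonempty) (hmaps : MapsTo (f • ·) C C) (hfix : ∀ x ∈ C, f • x ≠ x) (j : ℕ) :
    f ^ (j + 1) ≠ f ^ j := by
  obtain ⟨x, hx⟩ := hC
  have hpow : f ^ j • x ∈ C := by
    induction j with
    | zero => simpa using hx
    | succ j ih => rw [pow_succ', mul_smul]; exact hmaps ih
  intro h
  exact hfix _ hpow (by rw [← mul_smul, ← pow_succ', h])

section

variable {Q : Type*} [DecidableEq Q]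

theorem unitaryT_apply_self (p q : Q) : unitaryT p q p = q := if_pos rfl

theorem unitaryT_apply_of_ne {p q x : Q} (hx : x ≠ p) : unitaryT p q x = x := if_neg hx

def pathProd (p : ℕ → Q) : ℕ → Function.End Q
  | 0 => 1
  | n + 1 => pathProd p n * unitaryT (p n) (p (n + 1))

variable {p : ℕ → Q}

theorem pathProd_succ_apply (n : ℕ) (x : Q) :
    pathProd p (n + 1) x = pathProd p n (unitaryT (p n) (p (n + 1)) x) := rfl

theorem pathProd_mem_closure {T : Set (Function.End Q)} {n : ℕ} (hn : 0 < n)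
    (hT : ∀ i < n, unitaryT (p i) (p (i + 1)) ∈ T) : pathProd p n ∈ Subsemigroup.closure T := by
  induction n, hn using Nat.le_induction with
  | base => simpa [pathProd] using Subsemigroup.subset_closure (hT 0 one_pos)
  | succ n _ ih =>
    exact mul_mem (ih fun i hi => hT i (by omega)) (Subsemigroup.subset_closure (hT n (by omega)))

theorem pathProd_apply_of_forall_ne {n : ℕ} {x : Q} (hx : ∀ i < n, x ≠ p i) :
    pathProd p n x = x := by
  induction n with
  | zero => rfl
  | succ n ih =>
    rw [pathProd_succ_apply, unitaryT_apply_of_ne (hx n n.lt_succ_self),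
      ih fun i hi => hx i (by omega)]

theorem pathProd_apply {n i : ℕ} (hp : InjOn p (Iic n)) (hi : i < n) :
    pathProd p n (p i) = p (i + 1) := by
  induction n with
  | zero => omega
  | succ n ih =>
    rw [pathProd_succ_apply]
    rcases Nat.lt_succ_iff_lt_or_eq.mp hi with hi | rfl
    · rw [unitaryT_apply_of_ne (hp.ne (mem_Iic.mpr (by omega)) (mem_Iic.mpr (by omega)) hi.ne),
        ih (hp.mono (Iic_subset_Iic.mpr n.le_succ)) hi]
    · rw [unitaryT_apply_self]
      exact pathProd_apply_of_forall_ne fun j hj =>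
        hp.ne (mem_Iic.mpr le_rfl) (mem_Iic.mpr (by omega)) (by omega)

theorem pathProd_mul_unitaryT_apply {n i : ℕ} (hp : InjOn p (Iic n)) (hi : i ∈ Icc 1 n) :
    (pathProd p n * unitaryT (p n) (p 0)) (p i) = p (if i = n then 1 else i + 1) := by
  change pathProd p n (unitaryT (p n) (p 0) (p i)) = _
  obtain ⟨hi1, hin⟩ := hi
  split_ifs with h
  · rw [h, unitaryT_apply_self, pathProd_apply hp (by omega)]
  · rw [unitaryT_apply_of_ne (hp.ne (mem_Iic.mpr hin) (mem_Iic.mpr le_rfl) h),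
      pathProd_apply hp (by omega)]

theorem pathProd_mul_unitaryT_pow_succ_ne_pow {n : ℕ} (hp : InjOn p (Iic n)) (hn : 2 ≤ n)
    (j : ℕ) : (pathProd p n * unitaryT (p n) (p 0)) ^ (j + 1) ≠
      (pathProd p n * unitaryT (p n) (p 0)) ^ j := by
  have hmem : ∀ i ∈ Icc 1 n, (if i = n then 1 else i + 1) ∈ Icc 1 n := by
    intro i ⟨_, _⟩; split_ifs <;> constructor <;> omega
  refine pow_succ_ne_pow_of_mapsTo (C := p '' Icc 1 n) ⟨p 1, 1, ⟨le_rfl, by omega⟩, rfl⟩ ?_ ?_ j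
  · rintro _ ⟨i, hi, rfl⟩
    exact ⟨_, hmem i hi, (pathProd_mul_unitaryT_apply hp hi).symm⟩
  · rintro _ ⟨i, hi, rfl⟩
    rw [Function.End.smul_def, pathProd_mul_unitaryT_apply hp hi]
    refine hp.ne (Icc_subset_Iic_self (hmem i hi)) (Icc_subset_Iic_self hi) ?_
    obtain ⟨_, _⟩ := hi
    split_ifs <;> omega

end

/-- If a set `T` of unitary transformations of a finite set `Q` contains a `k`-cyclic
subset `{(q0→q1), (q1→q2), …, (q_{k−1}→q0)}` with `k ≥ 3` (the `q_i` pairwise distinct),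
then the subsemigroup generated by `T` is not aperiodic: it contains an element `s`
with `s^(j+1) ≠ s^j` for every `j ≥ 1`. -/
theorem statement8 {Q : Type*} [DecidableEq Q] (T : Set (Function.End Q))
    (k : ℕ) (hk : 3 ≤ k) (q : Fin k → Q) (hq : Function.Injective q)
    (hcyc : ∀ i : Fin k, unitaryT (q i) (q (i + ⟨1, by omega⟩)) ∈ T) :
    ∃ s ∈ Subsemigroup.closure T, ∀ j : ℕ, 1 ≤ j → s ^ (j + 1) ≠ s ^ j := by
  obtain ⟨n, rfl⟩ : ∃ n, k = n + 1 := ⟨k - 1, by omega⟩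
  set p : ℕ → Q := fun i => q (Fin.ofNat (n + 1) i)
  have hp : InjOn p (Iic n) := fun i hi j hj h => by
    simpa [Nat.mod_eq_of_lt (Nat.lt_succ_of_le hi), Nat.mod_eq_of_lt (Nat.lt_succ_of_le hj)] using
      congrArg Fin.val (hq h)
  have hpT : ∀ i, unitaryT (p i) (p (i + 1)) ∈ T := fun i => by
    convert hcyc (Fin.ofNat (n + 1) i) using 3
    ext
    simp [Fin.val_add]
  have hp_period : p (n + 1) = p 0 := by simp [p]
  refine ⟨pathProd p (n + 1), pathProd_mem_closure n.succ_pos fun i _ => hpT i, fun j _ => ?_⟩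
  rw [pathProd, hp_period]
  exact pathProd_mul_unitaryT_pow_succ_ne_pow hp (by omega) j
end

section
/- Let n ≥ 2 be even and consider the composition (2, 2, …, 2) of n into n/2 parts. The submonoid of the monoid of transformations of Q_n = {0,…,n−1} generated by all Type 1 and Type 2 transformations of this composition, together with the identity, is aperiodic and has cardinality exactly n!·(n+1)! / (2^n · ((n/2)!)^2). In particular, the size of the maximal aperiodic unitary semigroup on n states is at least n!·(n+1)! / (2^n · ((n/2)!)^2). -/
/-- `x` lies in the `i`-th block `Q_i = {r_i, …, r_i + n_i − 1}` of the composition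
given by the list `L = [n1, …, nm]`, where `r_i = n1 + ⋯ + n_{i−1}`
(blocks are indexed from `0` here). -/
def InBlock (L : List ℕ) (i : ℕ) {n : ℕ} (x : Fin n) : Prop :=
  (L.take i).sum ≤ (x : ℕ) ∧ (x : ℕ) < (L.take (i + 1)).sum

/-- Type 1 transformations: the unitary transformations `(q→q+1)` and `(q+1→q)` for
`q, q+1` lying in the same block. -/
def Type1 (L : List ℕ) (n : ℕ) : Set (Function.End (Fin n)) :=
  {f | ∃ (i : ℕ) (p q : Fin n), (q : ℕ) = (p : ℕ) + 1 ∧ InBlock L i p ∧ InBlock L i q ∧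
      (f = unitaryT p q ∨ f = unitaryT q p)}

/-- Type 2 transformations: the unitary transformations `(q→p)` with `q ∈ Q_i`,
`p ∈ Q_j` and `i < j`. -/
def Type2 (L : List ℕ) (n : ℕ) : Set (Function.End (Fin n)) :=
  {f | ∃ (i j : ℕ) (q p : Fin n), i < j ∧ InBlock L i q ∧ InBlock L j p ∧ f = unitaryT q p}

/-!
The generated monoid is exactly the set of maps `f` of `Fin n` with `f x / 2 ≥ x / 2` for all `x`
and without 2-cycles. In such a map every periodic point is fixed: an orbit cannot leave a block
`{2i, 2i + 1}` and come back, and inside a two-point block a nontrivial cycle is a 2-cycle. This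
gives aperiodicity, and it also lets one peel off a generator: if `x` is moved and `f x` is fixed,
then `f = f[x ↦ x] ∘ (x → f x)`. For the count, `f` is determined by the images of the blocks,
chosen independently: block `i` goes into the `n - 2i` points of the blocks `≥ i`, except for the
swap, which gives `∏ ((n - 2i)² - 1) = n! (n + 1)! / (2ⁿ (n/2)!²)`.
-/

open Function
open scoped Nat

section Dynamics

variable {α : Type*} [Fintype α] {f : α → α}

theorem Function.isFixedPt_iterate_of_card_le (h : periodicPts f ⊆ fixedPoints f) (x : α)
    {k : ℕ} (hk : Fintype.card α ≤ k) : IsFixedPt f (f^[k] x) := by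
  obtain ⟨i, j, hij, heq⟩ := Fintype.exists_ne_map_eq_of_card_lt
    (fun i : Fin (Fintype.card α + 1) => f^[i] x) (by simp)
  wlog hlt : i < j generalizing i j
  · exact this j i hij.symm heq.symm (lt_of_le_of_ne (not_lt.1 hlt) hij.symm)
  have hper : IsPeriodicPt f (j - i) (f^[i] x) := by
    rw [IsPeriodicPt, IsFixedPt, ← iterate_add_apply, Nat.sub_add_cancel hlt.le]
    exact heq.symm
  have hfix : IsFixedPt f (f^[i] x) := h (mk_mem_periodicPts (by omega) hper)
  rw [show k = (k - i) + i by omega, iterate_add_apply, (hfix.iterate _).eq]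
  exact hfix

theorem Function.iterate_succ_eq_of_card_le (h : periodicPts f ⊆ fixedPoints f)
    {k : ℕ} (hk : Fintype.card α ≤ k) : f^[k + 1] = f^[k] :=
  funext fun x => by rw [iterate_succ_apply']; exact isFixedPt_iterate_of_card_le h x hk

theorem Function.exists_not_isFixedPt_isFixedPt_apply (h : periodicPts f ⊆ fixedPoints f)
    {x : α} (hx : ¬IsFixedPt f x) : ∃ y, ¬IsFixedPt f y ∧ IsFixedPt f (f y) := by
  classical
  have hex : ∃ k, IsFixedPt f (f^[k] x) := ⟨_, isFixedPt_iterate_of_card_le h x le_rfl⟩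
  have hpos : Nat.find hex ≠ 0 := fun h0 => hx (by simpa [h0] using Nat.find_spec hex)
  refine ⟨f^[Nat.find hex - 1] x, Nat.find_min hex (by omega), ?_⟩
  rw [← iterate_succ_apply' f, Nat.succ_eq_add_one, Nat.sub_add_cancel (by omega)]
  exact Nat.find_spec hex

end Dynamics

theorem update_self_comp_unitaryT {α : Type*} [DecidableEq α] {f : α → α} {y : α}
    (hy : IsFixedPt f (f y)) : update f y y ∘ unitaryT y (f y) = f := by
  funext z
  change update f y y (if z = y then f y else z) = f z
  rw [IsFixedPt] at hy
  grind

section PairBlocks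

variable {n : ℕ}

theorem Fin.eq_or_eq_of_div_two_eq {a b c : Fin n} (hab : a ≠ b) (h : (a : ℕ) / 2 = b / 2)
    (hc : (c : ℕ) / 2 = a / 2) : c = a ∨ c = b := by
  rw [Ne, Fin.ext_iff] at hab
  simp only [Fin.ext_iff]
  omega

def pairBlockMonoid (n : ℕ) : Submonoid (Function.End (Fin n)) where
  carrier := {f | (∀ x : Fin n, (x : ℕ) / 2 ≤ (f x : ℕ) / 2) ∧ ∀ x y, f x = y → f y = x → x = y}
  one_mem' := ⟨fun _ => le_rfl, fun _ _ h _ => h⟩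
  mul_mem' := by
    rintro f g ⟨hf, hf₂⟩ ⟨hg, hg₂⟩
    refine ⟨fun x => (hg x).trans (hf (g x)), fun x y (hxy : f (g x) = y) (hyx : f (g y) = x) => ?_⟩
    by_contra hne
    have hx := hg x; have hgx := hf (g x); have hy := hg y; have hgy := hf (g y)
    rw [hxy] at hgx; rw [hyx] at hgy
    have hblock : (x : ℕ) / 2 = y / 2 := by omega
    rcases Fin.eq_or_eq_of_div_two_eq hne hblock (c := g x) (by omega) with h₁ | h₁ <;>
    rcases Fin.eq_or_eq_of_div_two_eq hne hblock (c := g y) (by omega) with h₂ | h₂ <;>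
    grind

theorem unitaryT_mem_pairBlockMonoid {p q : Fin n} (h : (p : ℕ) / 2 ≤ q / 2) :
    unitaryT p q ∈ pairBlockMonoid n := by
  refine ⟨fun x => ?_, fun x y => ?_⟩ <;> unfold unitaryT
  · split_ifs with hx
    · exact hx ▸ h
    · exact le_rfl
  · grind

theorem update_self_mem_pairBlockMonoid {f : Fin n → Fin n} (hf : f ∈ pairBlockMonoid n)
    (y : Fin n) : update f y y ∈ pairBlockMonoid n := by
  refine ⟨fun x => ?_, fun a b => ?_⟩ <;> rw [update_apply]
  · split_ifs with hx
    · exact hx ▸ le_rfl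
    · exact hf.1 x
  · rw [update_apply]; have := hf.2 a b; grind

namespace pairBlockMonoid

variable {f : Fin n → Fin n} (hf : f ∈ pairBlockMonoid n)
include hf

theorem div_two_apply_eq_of_isPeriodicPt {x : Fin n} {k : ℕ} (hk : 0 < k)
    (hx : IsPeriodicPt f k x) : (f x : ℕ) / 2 = x / 2 := by
  have hmono : Monotone fun j => ((f^[j] x : Fin n) : ℕ) / 2 :=
    monotone_nat_of_le_succ fun j => by simp only [iterate_succ_apply']; exact hf.1 _
  have := hmono (Nat.one_le_iff_ne_zero.2 hk.ne')
  simp only [iterate_one, hx.eq] at this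
  exact le_antisymm this (hf.1 x)

theorem periodicPts_subset_fixedPoints : periodicPts f ⊆ fixedPoints f := by
  rintro x ⟨k, hk, hx⟩
  by_contra hfx
  have h₁ := div_two_apply_eq_of_isPeriodicPt hf hk hx
  have h₂ := div_two_apply_eq_of_isPeriodicPt hf hk (hx.apply_iterate 1)
  rw [iterate_one] at h₂
  rcases Fin.eq_or_eq_of_div_two_eq (Ne.symm hfx) h₁.symm (c := f (f x)) (by omega) with h | h
  · exact hfx (hf.2 _ _ rfl h).symm
  · have := hx.eq
    rw [show k = (k - 1) + 1 by omega, iterate_succ_apply, (IsFixedPt.iterate h _).eq] at this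
    exact hfx this

end pairBlockMonoid

end PairBlocks

theorem pairBlockMonoid_le_closure {n : ℕ} {S : Set (Function.End (Fin n))}
    (hS : ∀ p q : Fin n, p ≠ q → (p : ℕ) / 2 ≤ q / 2 → unitaryT p q ∈ S) :
    pairBlockMonoid n ≤ Submonoid.closure S := by
  classical
  intro (f : Fin n → Fin n) hf
  induction h : (Finset.univ.filter fun x => f x ≠ x).card using Nat.strong_induction_on
    generalizing f with
  | _ k ih =>
  by_cases hid : ∀ x, f x = x
  · rw [show f = id from funext hid]
    exact one_mem _
  push Not at hid
  obtain ⟨x, hx⟩ := hid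
  obtain ⟨y, hy, hfy⟩ := exists_not_isFixedPt_isFixedPt_apply
    (pairBlockMonoid.periodicPts_subset_fixedPoints hf) hx
  rw [← update_self_comp_unitaryT hfy]
  refine Submonoid.mul_mem _ (ih _ ?_ (update_self_mem_pairBlockMonoid hf y) rfl)
    (Submonoid.subset_closure (hS _ _ (Ne.symm hy) (hf.1 y)))
  rw [← h]
  refine Finset.card_lt_card ((Finset.ssubset_iff_of_subset ?_).2 ⟨y, ?_, ?_⟩)
  · intro z
    simp only [Finset.mem_filter, Finset.mem_univ, true_and, update_apply]
    split_ifs <;> simp_all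
  · simpa [IsFixedPt] using hy
  · simp

section Replicate

variable {m n : ℕ}

theorem inBlock_replicate_two_iff (hn : n ≤ 2 * m) (i : ℕ) (x : Fin n) :
    InBlock (List.replicate m 2) i x ↔ (x : ℕ) / 2 = i := by
  have := x.isLt
  simp only [InBlock, List.take_replicate, List.sum_replicate, smul_eq_mul]
  omega

theorem unitaryT_mem_type1_union_type2 (hn : n ≤ 2 * m) {p q : Fin n} (hpq : p ≠ q)
    (h : (p : ℕ) / 2 ≤ q / 2) :
    unitaryT p q ∈ Type1 (List.replicate m 2) n ∪ Type2 (List.replicate m 2) n := by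
  have hblock (x : Fin n) := (inBlock_replicate_two_iff hn (x / 2) x).2 rfl
  rw [Ne, Fin.ext_iff] at hpq
  rcases h.lt_or_eq with h | h
  · exact Or.inr ⟨_, _, p, q, h, hblock p, hblock q, rfl⟩
  · rcases Nat.lt_or_gt_of_ne hpq with hlt | hlt
    · exact Or.inl ⟨_, p, q, by omega, hblock p, h ▸ hblock q, Or.inl rfl⟩
    · exact Or.inl ⟨_, q, p, by omega, hblock q, h.symm ▸ hblock p, Or.inr rfl⟩

theorem exists_unitaryT_of_mem_type1_union_type2 (hn : n ≤ 2 * m) {f : Function.End (Fin n)}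
    (hf : f ∈ Type1 (List.replicate m 2) n ∪ Type2 (List.replicate m 2) n) :
    ∃ p q : Fin n, p ≠ q ∧ (p : ℕ) / 2 ≤ q / 2 ∧ f = unitaryT p q := by
  simp only [Set.mem_union, Type1, Type2, inBlock_replicate_two_iff hn] at hf
  rcases hf with ⟨i, p, q, hpq, rfl, hq, rfl | rfl⟩ | ⟨i, j, q, p, hij, rfl, rfl, rfl⟩
  · exact ⟨p, q, Fin.ne_of_val_ne (by omega), by omega, rfl⟩
  · exact ⟨q, p, Fin.ne_of_val_ne (by omega), by omega, rfl⟩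
  · exact ⟨q, p, Fin.ne_of_val_ne (by omega), hij.le, rfl⟩

theorem closure_type1_union_type2 (hn : n ≤ 2 * m) :
    Submonoid.closure (Type1 (List.replicate m 2) n ∪ Type2 (List.replicate m 2) n) =
      pairBlockMonoid n := by
  refine le_antisymm (Submonoid.closure_le.2 fun f hf => ?_)
    (pairBlockMonoid_le_closure fun _ _ => unitaryT_mem_type1_union_type2 hn)
  obtain ⟨p, q, -, h, rfl⟩ := exists_unitaryT_of_mem_type1_union_type2 hn hf
  exact unitaryT_mem_pairBlockMonoid h

end Replicate

section Counting

variable {m : ℕ}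

def pairBlockEquiv (m : ℕ) : Fin m × Fin 2 ≃ Fin (2 * m) :=
  finProdFinEquiv.trans (finCongr (Nat.mul_comm m 2))

@[simp]
theorem pairBlockEquiv_val (p : Fin m × Fin 2) :
    (pairBlockEquiv m p : ℕ) = p.2 + 2 * p.1 := by
  simp [pairBlockEquiv]

def blockImages (i : Fin m) : Finset (Fin 2 → Fin (2 * m)) :=
  (Fintype.piFinset fun _ => Finset.Ici (pairBlockEquiv m (i, 0))).erase
    ![pairBlockEquiv m (i, 1), pairBlockEquiv m (i, 0)]

theorem card_blockImages (i : Fin m) : (blockImages i).card = (2 * m - 2 * i) ^ 2 - 1 := by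
  rw [blockImages, Finset.card_erase_of_mem, Fintype.card_piFinset]
  · simp
  · simp [Fin.le_def]

theorem mem_blockImages {i : Fin m} {v : Fin 2 → Fin (2 * m)} :
    v ∈ blockImages i ↔ (∀ j, 2 * (i : ℕ) ≤ v j) ∧
      ¬(v 0 = pairBlockEquiv m (i, 1) ∧ v 1 = pairBlockEquiv m (i, 0)) := by
  simp [blockImages, Fin.le_def, funext_iff, Fin.forall_fin_two, and_comm]

theorem mem_pairBlockMonoid_iff_forall_mem_blockImages (f : Function.End (Fin (2 * m))) :
    f ∈ pairBlockMonoid (2 * m) ↔ ∀ i, (fun j => f (pairBlockEquiv m (i, j))) ∈ blockImages i := by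
  have hsurj := (pairBlockEquiv m).surjective
  simp only [mem_blockImages]
  constructor
  · intro hf i
    refine ⟨fun j => ?_, fun ⟨h₀, h₁⟩ => ?_⟩
    · have := hf.1 (pairBlockEquiv m (i, j))
      simp only [pairBlockEquiv_val] at this
      omega
    · simpa [Fin.ext_iff] using hf.2 _ _ h₀ h₁
  · intro h
    have hmono (x : Fin (2 * m)) : (x : ℕ) / 2 ≤ (f x : ℕ) / 2 := by
      obtain ⟨⟨i, j⟩, rfl⟩ := hsurj x
      have := (h i).1 j
      simp only [pairBlockEquiv_val]
      omega
    refine ⟨hmono, fun x y hxy hyx => ?_⟩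
    have hblock : (x : ℕ) / 2 = y / 2 := by
      have := hmono x; have := hmono y; rw [hxy] at *; rw [hyx] at *; omega
    obtain ⟨⟨i, j⟩, rfl⟩ := hsurj x
    obtain ⟨⟨i', j'⟩, rfl⟩ := hsurj y
    obtain rfl : i = i' := by simp only [pairBlockEquiv_val] at hblock; ext; omega
    fin_cases j <;> fin_cases j'
    · rfl
    · exact absurd ⟨hxy, hyx⟩ (h i).2
    · exact absurd ⟨hyx, hxy⟩ (h i).2
    · rfl

theorem card_pairBlockMonoid :
    Nat.card (pairBlockMonoid (2 * m)) = ∏ i : Fin m, ((2 * m - 2 * i) ^ 2 - 1) := by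
  let e : Function.End (Fin (2 * m)) ≃ (Fin m → Fin 2 → Fin (2 * m)) :=
    ((pairBlockEquiv m).arrowCongr (Equiv.refl _)).symm.trans (Equiv.curry _ _ _)
  calc Nat.card (pairBlockMonoid (2 * m))
      = Nat.card {F : Fin m → Fin 2 → Fin (2 * m) // ∀ i, F i ∈ blockImages i} :=
        Nat.card_congr (e.subtypeEquiv mem_pairBlockMonoid_iff_forall_mem_blockImages)
    _ = ∏ i : Fin m, (blockImages i).card := by
        rw [Nat.card_congr (Equiv.subtypePiEquivPi), Nat.card_pi]
        simp
    _ = ∏ i : Fin m, ((2 * m - 2 * i) ^ 2 - 1) := by simp only [card_blockImages]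

theorem two_pow_mul_factorial_sq_mul_prod (m : ℕ) :
    2 ^ (2 * m) * m ! ^ 2 * ∏ i : Fin m, ((2 * m - 2 * i) ^ 2 - 1) = (2 * m)! * (2 * m + 1)! := by
  induction m with
  | zero => simp
  | succ m ih =>
    have hsucc (i : Fin m) :
        (2 * (m + 1) - 2 * (i.succ : ℕ)) ^ 2 - 1 = (2 * m - 2 * i) ^ 2 - 1 := by
      rw [Fin.val_succ, show 2 * (m + 1) - 2 * (i + 1) = 2 * m - 2 * i by omega]
    have hfirst :
        (2 * (m + 1) - 2 * ((0 : Fin (m + 1)) : ℕ)) ^ 2 - 1 = (2 * m + 1) * (2 * m + 3) := by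
      simp only [Fin.val_zero, mul_zero, Nat.sub_zero]
      ring_nf; omega
    rw [Fin.prod_univ_succ, hfirst, Finset.prod_congr rfl fun i _ => hsucc i]
    set P := ∏ i : Fin m, ((2 * m - 2 * i) ^ 2 - 1)
    calc 2 ^ (2 * (m + 1)) * (m + 1)! ^ 2 * ((2 * m + 1) * (2 * m + 3) * P)
        = 4 * (m + 1) ^ 2 * ((2 * m + 1) * (2 * m + 3)) * (2 ^ (2 * m) * m ! ^ 2 * P) := by
          rw [Nat.factorial_succ]; ring
      _ = (2 * (m + 1))! * (2 * (m + 1) + 1)! := by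
          rw [ih, show 2 * (m + 1) = 2 * m + 1 + 1 by ring, Nat.factorial_succ (2 * m + 1 + 1),
            Nat.factorial_succ (2 * m + 1), Nat.factorial_succ (2 * m)]
          ring

end Counting

theorem statement13_general (n : ℕ) (heven : Even n) :
    (∀ s ∈ Submonoid.closure (Type1 (List.replicate (n / 2) 2) n ∪
        Type2 (List.replicate (n / 2) 2) n), ∃ k : ℕ, 1 ≤ k ∧ s ^ (k + 1) = s ^ k) ∧
    Nat.card (Submonoid.closure (Type1 (List.replicate (n / 2) 2) n ∪
        Type2 (List.replicate (n / 2) 2) n)) =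
      Nat.factorial n * Nat.factorial (n + 1) /
        (2 ^ n * (Nat.factorial (n / 2)) ^ 2) ∧
    ∃ T : Set (Function.End (Fin n)),
      (∀ t ∈ T, ∃ p q : Fin n, p ≠ q ∧ t = unitaryT p q) ∧
      (∀ s ∈ Submonoid.closure T, ∃ k : ℕ, 1 ≤ k ∧ s ^ (k + 1) = s ^ k) ∧
      Nat.factorial n * Nat.factorial (n + 1) / (2 ^ n * (Nat.factorial (n / 2)) ^ 2) ≤
        Nat.card (Submonoid.closure T) := by
  obtain ⟨m, rfl⟩ := heven.two_dvd
  have hclosure := closure_type1_union_type2 (m := m) (n := 2 * m) le_rfl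
  have haperiodic (s) (hs : s ∈ pairBlockMonoid (2 * m)) : ∃ k, 1 ≤ k ∧ s ^ (k + 1) = s ^ k :=
    ⟨2 * m + 1, by omega,
      iterate_succ_eq_of_card_le (pairBlockMonoid.periodicPts_subset_fixedPoints hs) (by simp)⟩
  have hcard : Nat.card (pairBlockMonoid (2 * m)) =
      (2 * m)! * (2 * m + 1)! / (2 ^ (2 * m) * m ! ^ 2) := by
    rw [card_pairBlockMonoid, ← two_pow_mul_factorial_sq_mul_prod,
      Nat.mul_div_cancel_left _ (by positivity)]
  rw [Nat.mul_div_cancel_left m two_pos, hclosure]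
  refine ⟨haperiodic, hcard, _, fun t ht => ?_, hclosure ▸ haperiodic, hclosure ▸ hcard.ge⟩
  obtain ⟨p, q, hpq, -, rfl⟩ := exists_unitaryT_of_mem_type1_union_type2 le_rfl ht
  exact ⟨p, q, hpq, rfl⟩

/-- For even `n ≥ 2` and the composition `(2,2,…,2)` of `n` into `n/2` parts, the
submonoid of transformations of `Q_n` generated by all Type 1 and Type 2
transformations, together with the identity, is aperiodic and has cardinality exactly
`n!·(n+1)!/(2^n·((n/2)!)^2)`; in particular, the size of the maximal aperiodic unitary
semigroup on `n` states is at least this number. -/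
theorem statement13 (n : ℕ) (hn : 2 ≤ n) (heven : Even n) :
    (∀ s ∈ Submonoid.closure (Type1 (List.replicate (n / 2) 2) n ∪
        Type2 (List.replicate (n / 2) 2) n), ∃ k : ℕ, 1 ≤ k ∧ s ^ (k + 1) = s ^ k) ∧
    Nat.card (Submonoid.closure (Type1 (List.replicate (n / 2) 2) n ∪
        Type2 (List.replicate (n / 2) 2) n)) =
      Nat.factorial n * Nat.factorial (n + 1) /
        (2 ^ n * (Nat.factorial (n / 2)) ^ 2) ∧
    ∃ T : Set (Function.End (Fin n)),
      (∀ t ∈ T, ∃ p q : Fin n, p ≠ q ∧ t = unitaryT p q) ∧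
      (∀ s ∈ Submonoid.closure T, ∃ k : ℕ, 1 ≤ k ∧ s ^ (k + 1) = s ^ k) ∧
      Nat.factorial n * Nat.factorial (n + 1) / (2 ^ n * (Nat.factorial (n / 2)) ^ 2) ≤
        Nat.card (Submonoid.closure T) :=
  statement13_general n heven
end

section
/- Let A and B be finite nonempty sets, let T_A and T_B be sets of transformations of A and of B whose generated submonoids (under composition, including the identity) are aperiodic, and fix a0 ∈ A. Then the submonoid of transformations of the disjoint union C = A ⊔ B generated by the semiconstant-sum generating set T_C determined by T_A, T_B and a0 is also aperiodic. -/
/-- The semiconstant-sum generating set on `C = A ⊕ B` determined by `T_A`, `T_B`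
and `a0 ∈ A`: the transformations of `A` and of `B` extended by the identity, all
unitary transformations from `A` to `B`, and the constant transformation to `a0`. -/
def scGens {A B : Type*} [DecidableEq A] [DecidableEq B]
    (TA : Set (Function.End A)) (TB : Set (Function.End B)) (a0 : A) :
    Set (Function.End (A ⊕ B)) :=
  {f | ∃ t ∈ TA, f = Sum.map (t : A → A) id} ∪
  {f | ∃ t ∈ TB, f = Sum.map id (t : B → B)} ∪
  {f | ∃ (a : A) (b : B), f = unitaryT (Sum.inl a) (Sum.inr b)} ∪
  {fun _ => Sum.inl a0}

/-!
Every non-constant element `s` of the generated monoid is *triangular*: it maps `B` into `B`,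
acting there as some `u ∈ ⟨T_B⟩`, and whenever it keeps a point of `A` inside `A` it acts on
that point as some `t ∈ ⟨T_A⟩`. Points of `A` may thus leave for `B`, but nothing returns.
If `t ^ (k + 1) = t ^ k` and `u ^ (l + 1) = u ^ l`, a point of `A` either is still in `A` after
`k + 1` steps, and then already sits at a fixed point of `s` after `k` steps, or it has reached
`B` by then and is fixed after `l` further steps. Hence `s ^ (k + l + 2) = s ^ (k + l + 1)`.
Constant maps are idempotent.
-/

open Sum

namespace Function.End

variable {α : Type*}

theorem pow_succ_apply_eq_of_le {s : Function.End α} {x : α} {m n : ℕ}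
    (h : (s ^ (m + 1)) x = (s ^ m) x) (hmn : m ≤ n) : (s ^ (n + 1)) x = (s ^ n) x := by
  obtain ⟨d, rfl⟩ := Nat.exists_eq_add_of_le hmn
  calc (s ^ (m + d + 1)) x = (s ^ d) ((s ^ (m + 1)) x) := by
        rw [add_right_comm, add_comm, pow_add]; rfl
    _ = (s ^ d) ((s ^ m) x) := by rw [h]
    _ = (s ^ (m + d)) x := by rw [add_comm, pow_add]; rfl

end Function.End

section Triangular

variable {A B : Type*}

def IsTriangular (t : Function.End A) (u : Function.End B) (s : Function.End (A ⊕ B)) : Prop :=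
  (∀ b, s (inr b) = inr (u b)) ∧ ∀ a a', s (inl a) = inl a' → a' = t a

theorem isTriangular_sumMap (t : Function.End A) (u : Function.End B) :
    IsTriangular t u (Sum.map t u) :=
  ⟨fun _ => rfl, fun _ _ h => (inl_injective h).symm⟩

theorem isTriangular_unitaryT [DecidableEq A] [DecidableEq B] (a : A) (b : B) :
    IsTriangular 1 1 (unitaryT (inl a) (inr b)) := by
  refine ⟨fun _ => if_neg inr_ne_inl, fun a' a'' h => ?_⟩
  by_cases ha : a' = a
  · simp [unitaryT, ha] at h
  · rw [unitaryT, if_neg (inl_injective.ne ha)] at h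
    exact (inl_injective h).symm

namespace IsTriangular

variable {t t' : Function.End A} {u u' : Function.End B} {s s' : Function.End (A ⊕ B)}

theorem one : IsTriangular (1 : Function.End A) (1 : Function.End B) 1 :=
  isTriangular_sumMap 1 1

theorem exists_eq_inl_of_apply_eq_inl (hs : IsTriangular t u s) {x : A ⊕ B} {a : A}
    (h : s x = inl a) : ∃ a', x = inl a' := by
  rcases x with a' | b
  · exact ⟨a', rfl⟩
  · simp [hs.1] at h

theorem mul (hs : IsTriangular t u s) (hs' : IsTriangular t' u' s') :
    IsTriangular (t * t') (u * u') (s * s') := by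
  refine ⟨fun b => ?_, fun a a'' h => ?_⟩
  · change s (s' (inr b)) = _
    rw [hs'.1, hs.1]; rfl
  · change s (s' (inl a)) = inl a'' at h
    obtain ⟨a', ha'⟩ := hs.exists_eq_inl_of_apply_eq_inl h
    rw [ha'] at h
    rw [hs.2 _ _ h, hs'.2 _ _ ha']; rfl

theorem pow (hs : IsTriangular t u s) (n : ℕ) : IsTriangular (t ^ n) (u ^ n) (s ^ n) := by
  induction n with
  | zero => exact one
  | succ n ih => rw [pow_succ, pow_succ, pow_succ]; exact ih.mul hs

theorem pow_succ_eq {k l : ℕ} (hs : IsTriangular t u s) (hk : t ^ (k + 1) = t ^ k)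
    (hl : u ^ (l + 1) = u ^ l) : s ^ (k + l + 1 + 1) = s ^ (k + l + 1) := by
  have stable_inr (b : B) : (s ^ (l + 1)) (inr b) = (s ^ l) (inr b) := by
    rw [(hs.pow _).1, (hs.pow _).1, hl]
  funext x
  rcases x with a | b
  · rcases hk1 : (s ^ (k + 1)) (inl a) with a' | b
    · refine Function.End.pow_succ_apply_eq_of_le (m := k) ?_ (by omega)
      obtain ⟨a'', hk0⟩ := hs.exists_eq_inl_of_apply_eq_inl (a := a')
        (by rw [← hk1, pow_succ']; rfl)
      rw [hk1, hk0, (hs.pow _).2 _ _ hk1, (hs.pow _).2 _ _ hk0, hk]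
    · refine Function.End.pow_succ_apply_eq_of_le (m := l + (k + 1)) ?_ (by omega)
      rw [show l + (k + 1) + 1 = (l + 1) + (k + 1) by omega, pow_add s (l + 1),
        pow_add s l (k + 1)]
      change (s ^ (l + 1)) ((s ^ (k + 1)) (inl a)) = (s ^ l) ((s ^ (k + 1)) (inl a))
      rw [hk1, stable_inr]
  · exact Function.End.pow_succ_apply_eq_of_le (m := l) (stable_inr b) (by omega)

end IsTriangular

theorem const_or_isTriangular_of_mem_closure_scGens [DecidableEq A] [DecidableEq B]
    {TA : Set (Function.End A)} {TB : Set (Function.End B)} {a0 : A} {s : Function.End (A ⊕ B)}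
    (hs : s ∈ Submonoid.closure (scGens TA TB a0)) :
    (∃ c, s = fun _ => c) ∨
      ∃ t ∈ Submonoid.closure TA, ∃ u ∈ Submonoid.closure TB, IsTriangular t u s := by
  induction hs using Submonoid.closure_induction with
  | mem f hf =>
    rcases hf with ((⟨t, ht, rfl⟩ | ⟨u, hu, rfl⟩) | ⟨a, b, rfl⟩) | hc
    · exact .inr ⟨t, Submonoid.subset_closure ht, 1, one_mem _, isTriangular_sumMap t 1⟩
    · exact .inr ⟨1, one_mem _, u, Submonoid.subset_closure hu, isTriangular_sumMap 1 u⟩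
    · exact .inr ⟨1, one_mem _, 1, one_mem _, isTriangular_unitaryT a b⟩
    · exact .inl ⟨_, hc⟩
  | one => exact .inr ⟨1, one_mem _, 1, one_mem _, .one⟩
  | mul s s' _ _ hs hs' =>
    rcases hs with ⟨c, rfl⟩ | ⟨t, ht, u, hu, hs⟩
    · exact .inl ⟨c, rfl⟩
    rcases hs' with ⟨c, rfl⟩ | ⟨t', ht', u', hu', hs'⟩
    · exact .inl ⟨s c, rfl⟩
    exact .inr ⟨t * t', mul_mem ht ht', u * u', mul_mem hu hu', hs.mul hs'⟩

end Triangular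

theorem statement14_general {A B : Type*} [DecidableEq A] [DecidableEq B]
    (TA : Set (Function.End A)) (TB : Set (Function.End B)) (a0 : A)
    (hA : ∀ s ∈ Submonoid.closure TA, ∃ k : ℕ, 1 ≤ k ∧ s ^ (k + 1) = s ^ k)
    (hB : ∀ s ∈ Submonoid.closure TB, ∃ k : ℕ, 1 ≤ k ∧ s ^ (k + 1) = s ^ k) :
    ∀ s ∈ Submonoid.closure (scGens TA TB a0), ∃ k : ℕ, 1 ≤ k ∧ s ^ (k + 1) = s ^ k := by
  intro s hs
  rcases const_or_isTriangular_of_mem_closure_scGens hs with ⟨c, rfl⟩ | ⟨t, ht, u, hu, hs⟩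
  · exact ⟨1, le_rfl, rfl⟩
  · obtain ⟨k, -, hk⟩ := hA t ht
    obtain ⟨l, -, hl⟩ := hB u hu
    exact ⟨k + l + 1, by omega, hs.pow_succ_eq hk hl⟩

/-- If the submonoids generated by `T_A` and `T_B` are aperiodic, then the submonoid
of transformations of `A ⊕ B` generated by the semiconstant-sum generating set is
also aperiodic. -/
theorem statement14 {A B : Type*} [Finite A] [Finite B] [DecidableEq A] [DecidableEq B]
    [Nonempty A] [Nonempty B]
    (TA : Set (Function.End A)) (TB : Set (Function.End B)) (a0 : A)
    (hA : ∀ s ∈ Submonoid.closure TA, ∃ k : ℕ, 1 ≤ k ∧ s ^ (k + 1) = s ^ k)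
    (hB : ∀ s ∈ Submonoid.closure TB, ∃ k : ℕ, 1 ≤ k ∧ s ^ (k + 1) = s ^ k) :
    ∀ s ∈ Submonoid.closure (scGens TA TB a0), ∃ k : ℕ, 1 ≤ k ∧ s ^ (k + 1) = s ^ k :=
  statement14_general TA TB a0 hA hB
end

section
/- Let D = (Q, Σ, δ, q0, F) be a deterministic finite automaton with finite state set Q of cardinality n and finite alphabet Σ, and suppose the transition monoid of D (the submonoid of self-maps of Q generated by the maps q ↦ δ(q, a) for a ∈ Σ) is aperiodic. Let L ⊆ Σ* be the language accepted by D, and let L^R = {w^R : w ∈ L} be its reversal, where w^R denotes the word w spelled backwards. Then the set of left quotients {w⁻¹L^R : w ∈ Σ*} has cardinality at most 2^n − 1. -/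
/-!
The quotient of `L^R` by `w` is the set of words `v` with `v^R` leading `q0` into
`T_w = {q | w^R.foldl δ q ∈ F}`, so there are at most as many quotients as such sets `T_u`,
which are the preimages of `F` under transformations of the transition monoid. No transformation
`f` of an aperiodic monoid has `f⁻¹ F = Fᶜ`: then `(f^(k+1))⁻¹ F` would be the complement of
`(f^k)⁻¹ F` for every `k`. Hence the sets `T_u` avoid `Fᶜ`, leaving at most `2^n − 1` of them.
-/

lemma foldl_mem_closure_letters {Q σ : Type*} (δ : Q → σ → Q) (u : List σ) :
    (fun q => u.foldl δ q : Function.End Q) ∈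
      Submonoid.closure {f : Function.End Q | ∃ a : σ, f = fun q => δ q a} := by
  induction u with
  | nil => exact Submonoid.one_mem (M := Function.End Q) _
  | cons a u ih =>
    exact Submonoid.mul_mem (M := Function.End Q) _ ih (Submonoid.subset_closure ⟨a, rfl⟩)

lemma Function.End.preimage_ne_compl_of_pow_succ_eq_pow {Q : Type*} [Nonempty Q]
    {f : Function.End Q} {k : ℕ} (hk : f ^ (k + 1) = f ^ k) (F : Set Q) :
    f ⁻¹' F ≠ Fᶜ := by
  intro hf
  have hpow : (f ^ (k + 1) : Q → Q) ⁻¹' F = ((f ^ k : Q → Q) ⁻¹' F)ᶜ := by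
    rw [pow_succ']
    exact congrArg (Set.preimage (f ^ k : Q → Q)) hf
  rw [hk] at hpow
  exact ne_compl_self hpow

lemma Set.ncard_le_card_sub_one_of_notMem {α : Type*} [Finite α] {s : Set α} {a : α}
    (ha : a ∉ s) : s.ncard ≤ Nat.card α - 1 := by
  have := Set.ncard_lt_card (s := s) (fun h => ha (h ▸ Set.mem_univ a))
  omega

theorem statement16_general {Q σ : Type*} [Finite Q]
    (δ : Q → σ → Q) (q0 : Q) (F : Set Q) (n : ℕ) (hn : Nat.card Q = n)
    (hap : ∀ s ∈ Submonoid.closure {f : Function.End Q | ∃ a : σ, f = fun q => δ q a},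
      ∃ k : ℕ, 1 ≤ k ∧ s ^ (k + 1) = s ^ k)
    (L LR : Set (List σ))
    (hL : L = {w : List σ | w.foldl δ q0 ∈ F})
    (hLR : LR = {w : List σ | w.reverse ∈ L}) :
    {S : Set (List σ) | ∃ w : List σ, S = {v : List σ | w ++ v ∈ LR}}.Finite ∧
    {S : Set (List σ) | ∃ w : List σ, S = {v : List σ | w ++ v ∈ LR}}.ncard ≤ 2 ^ n - 1 := by
  subst hL hLR hn
  set T : Set (Set Q) := Set.range fun u : List σ => {q | u.foldl δ q ∈ F}
  set Φ : Set Q → Set (List σ) := fun t => {v | v.reverse.foldl δ q0 ∈ t}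
  have hquot : {S : Set (List σ) | ∃ w : List σ,
      S = {v | w ++ v ∈ {w : List σ | w.reverse ∈ {w : List σ | w.foldl δ q0 ∈ F}}}} ⊆ Φ '' T := by
    rintro S ⟨w, rfl⟩
    refine ⟨_, ⟨w.reverse, rfl⟩, ?_⟩
    ext v
    simp [Φ]
  have hcompl : Fᶜ ∉ T := by
    rintro ⟨u, hu⟩
    obtain ⟨k, -, hk⟩ := hap _ (foldl_mem_closure_letters δ u)
    have : Nonempty Q := ⟨q0⟩
    exact Function.End.preimage_ne_compl_of_pow_succ_eq_pow hk F hu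
  have hfin : (Φ '' T).Finite := (Set.toFinite T).image Φ
  refine ⟨hfin.subset hquot, ?_⟩
  calc _ ≤ (Φ '' T).ncard := Set.ncard_le_ncard hquot hfin
    _ ≤ T.ncard := Set.ncard_image_le (Set.toFinite T)
    _ ≤ Nat.card (Set Q) - 1 := Set.ncard_le_card_sub_one_of_notMem hcompl
    _ = 2 ^ Nat.card Q - 1 := by
      have := Fintype.ofFinite Q
      rw [Nat.card_eq_fintype_card, Nat.card_eq_fintype_card, Fintype.card_set]

/-- If a DFA `D = (Q, Σ, δ, q0, F)` with `n` states has an aperiodic transition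
monoid, then the language `L^R` (the reversal of the language `L` accepted by `D`)
has at most `2^n − 1` left quotients. -/
theorem statement16 {Q σ : Type*} [Finite Q] [Finite σ]
    (δ : Q → σ → Q) (q0 : Q) (F : Set Q) (n : ℕ) (hn : Nat.card Q = n)
    (hap : ∀ s ∈ Submonoid.closure {f : Function.End Q | ∃ a : σ, f = fun q => δ q a},
      ∃ k : ℕ, 1 ≤ k ∧ s ^ (k + 1) = s ^ k)
    (L LR : Set (List σ))
    (hL : L = {w : List σ | w.foldl δ q0 ∈ F})
    (hLR : LR = {w : List σ | w.reverse ∈ L}) :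
    {S : Set (List σ) | ∃ w : List σ, S = {v : List σ | w ++ v ∈ LR}}.Finite ∧
    {S : Set (List σ) | ∃ w : List σ, S = {v : List σ | w ++ v ∈ LR}}.ncard ≤ 2 ^ n - 1 :=
  statement16_general δ q0 F n hn hap L LR hL hLR
end

section
/- Let Σ be a finite alphabet and let K, L ⊆ Σ* be languages each accepted by some deterministic finite automaton with finitely many states whose transition monoid is aperiodic. Suppose the quotient complexity of K is m with m ≥ 2, and the quotient complexity of L is 2. Then the quotient complexity of the concatenation KL = {uv : u ∈ K, v ∈ L} is at most 3m − 2. -/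
/-- The set of left quotients of a language `M ⊆ Σ*`. -/
def LeftQuotients {σ : Type*} (M : Set (List σ)) : Set (Set (List σ)) :=
  {S | ∃ w : List σ, S = {v : List σ | w ++ v ∈ M}}

/-- `K` is accepted by a DFA with finitely many states whose transition monoid is
aperiodic (i.e., `K` is star-free, by Schützenberger's theorem). -/
def AcceptedByAperiodicDFA {σ : Type*} (K : Set (List σ)) : Prop :=
  ∃ (Q : Type) (_ : Finite Q) (δ : Q → σ → Q) (q0 : Q) (F : Set Q),
    (∀ s ∈ Submonoid.closure {f : Function.End Q | ∃ a : σ, f = fun q => δ q a},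
      ∃ k : ℕ, 1 ≤ k ∧ s ^ (k + 1) = s ^ k) ∧
    K = {w : List σ | w.foldl δ q0 ∈ F}


/-!
By Brzozowski's formula, the quotient of `K * L` by `w` is `K_w * L` together with the union of
the quotients `L_s` over the factorisations `w = p ++ s` with `p ∈ K`. Here `L_s` is `L` or `L'`,
the two quotients of `L`, and exactly one of them, say `A`, contains `[]`; let `B` be the other.
Aperiodicity forbids a word swapping `L` and `L'`: the transition of such a word would have
period two. So every `z ∈ B` sends both `A` and `B` to `A`, whence `B ⊆ A` and `Σ* B ⊆ L`.
If `L' ⊆ L`, the quotients of `K * L` are among `X * L`, `X * L ∪ L` and `X * L ∪ L'` for `X` a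
quotient of `K`, where the last two are needed only for the at most `m - 1` quotients `X` not
containing `[]` (otherwise `X * L ⊇ L`). If `L ⊆ L'` and `Σ* L ⊆ L`, they are among `X * L`, `L`
and `L'`. Since `m ≥ 2`, `K` has quotients with and without `[]`, and either way there are at
most `m + 2 (m - 1)` of them.
-/

section

open Set Function

variable {σ : Type*}

theorem Function.eq_of_iterate_succ_eq_of_swap {α : Type*} {f : α → α} {a b : α}
    (hab : f a = b) (hba : f b = a) {k : ℕ} (hk : f^[k + 1] a = f^[k] a) : a = b := by
  have ha : IsPeriodicPt f 2 a := by simp [IsPeriodicPt, IsFixedPt, hab, hba]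
  have hb : IsPeriodicPt f 2 b := by simp [IsPeriodicPt, IsFixedPt, hab, hba]
  exact (ha.iterate k).eq_of_apply_eq_same (hb.iterate k) two_pos
    (by rw [← hab, ← iterate_succ_apply, hk])

theorem DFA.leftQuotient_acceptsFrom {Q : Type*} (M : DFA σ Q) (q : Q) (u : List σ) :
    (M.acceptsFrom q).leftQuotient u = M.acceptsFrom (M.evalFrom q u) := by
  ext v
  simp [DFA.mem_acceptsFrom, DFA.evalFrom_of_append]

theorem DFA.evalFrom_mem_closure {Q : Type*} (M : DFA σ Q) (u : List σ) :
    (M.evalFrom · u) ∈ (Submonoid.closure {f : Function.End Q | ∃ a : σ, f = fun q => M.step q a} :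
      Submonoid (Function.End Q)) := by
  induction u with
  | nil => exact Submonoid.one_mem (M := Function.End Q) _
  | cons a u ih =>
    exact Submonoid.mul_mem (M := Function.End Q) _ ih (Submonoid.subset_closure ⟨a, rfl⟩)

theorem AcceptedByAperiodicDFA.eq_of_leftQuotient_swap {L A B : Language σ}
    (hL : AcceptedByAperiodicDFA L) (hA : A ∈ range L.leftQuotient) {u : List σ}
    (hAB : A.leftQuotient u = B) (hBA : B.leftQuotient u = A) : A = B := by
  obtain ⟨Q, _, δ, q₀, F, haper, hLM⟩ := hL
  let M : DFA σ Q := ⟨δ, q₀, F⟩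
  replace hLM : L = M.accepts := hLM
  obtain ⟨k, -, hk⟩ := haper _ (M.evalFrom_mem_closure u)
  obtain ⟨a, rfl⟩ := hA
  refine eq_of_iterate_succ_eq_of_swap (f := (·.leftQuotient u)) hAB hBA (k := k) ?_
  have hsemi : Semiconj M.acceptsFrom (M.evalFrom · u) (·.leftQuotient u) :=
    fun q => (M.leftQuotient_acceptsFrom q u).symm
  rw [hLM, Language.leftQuotient_accepts_apply, ← (hsemi.iterate_right _).eq,
    ← (hsemi.iterate_right _).eq]
  -- powers in `Function.End Q` are iterates by definition
  exact congrArg (fun t : Function.End Q => M.acceptsFrom (t (M.eval a))) hk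

namespace Language

variable {K L A B : Language σ} {w : List σ}

theorem nil_mem_leftQuotient_iff : [] ∈ L.leftQuotient w ↔ w ∈ L := by
  simp

theorem leftQuotient_mem_range {M : Language σ} (hM : M ∈ range L.leftQuotient) (u : List σ) :
    M.leftQuotient u ∈ range L.leftQuotient := by
  obtain ⟨v, rfl⟩ := hM
  exact ⟨v ++ u, leftQuotient_append L v u⟩

theorem range_leftQuotient_eq_singleton {P : Prop} (h : ∀ w, w ∈ L ↔ P) :
    range L.leftQuotient = {L} := by
  refine range_eq_singleton_iff.mpr fun w => ext fun v => ?_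
  rw [mem_leftQuotient, h, h]

theorem exists_mem_and_exists_not_mem (h : 2 ≤ (range L.leftQuotient).ncard) :
    (∃ w, w ∈ L) ∧ ∃ w, w ∉ L := by
  constructor <;> by_contra! hL
  · rw [range_leftQuotient_eq_singleton (P := False) (by simpa using hL), ncard_singleton] at h
    omega
  · rw [range_leftQuotient_eq_singleton (P := True) (by simpa using hL), ncard_singleton] at h
    omega

theorem leftQuotient_eq_or_eq (hQ : range L.leftQuotient = {A, B}) (w : List σ) :
    L.leftQuotient w = A ∨ L.leftQuotient w = B := by
  have h := mem_range_self (f := L.leftQuotient) w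
  rwa [hQ] at h

theorem exists_range_leftQuotient_eq_pair (h : (range L.leftQuotient).ncard = 2) :
    ∃ L', L ≠ L' ∧ range L.leftQuotient = {L, L'} := by
  obtain ⟨a, b, hab, hQ⟩ := ncard_eq_two.mp h
  have hL : L ∈ ({a, b} : Set (Language σ)) := hQ ▸ ⟨[], leftQuotient_nil L⟩
  rcases hL with rfl | rfl
  · exact ⟨b, hab, hQ⟩
  · exact ⟨a, hab.symm, hQ.trans (pair_comm a L)⟩

theorem nil_mem_iff_nil_not_mem (hQ : range L.leftQuotient = {A, B}) (hAB : A ≠ B) :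
    [] ∈ A ↔ [] ∉ B := by
  by_contra h
  have hP : ∀ w, w ∈ L ↔ [] ∈ A := fun w => by
    rw [← nil_mem_leftQuotient_iff]
    rcases leftQuotient_eq_or_eq hQ w with hw | hw <;> rw [hw]
    tauto
  rw [range_leftQuotient_eq_singleton hP] at hQ
  have hAL := eq_singleton_iff_unique_mem.mp hQ.symm
  exact hAB ((hAL.2 A (by simp)).trans (hAL.2 B (by simp)).symm)

theorem leftQuotient_eq_of_mem (hL : AcceptedByAperiodicDFA L)
    (hQ : range L.leftQuotient = {A, B}) (hA : [] ∈ A) (hB : [] ∉ B) {z : List σ} (hz : z ∈ B) :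
    A.leftQuotient z = A ∧ B.leftQuotient z = A := by
  have hmem : ∀ M ∈ ({A, B} : Set (Language σ)), M.leftQuotient z = A ∨ M.leftQuotient z = B :=
    fun M hM => by
      have h := leftQuotient_mem_range (hQ ▸ hM) z
      rwa [hQ] at h
  have hBz : B.leftQuotient z = A :=
    (hmem B (by simp)).resolve_right fun h => hB (h ▸ nil_mem_leftQuotient_iff.mpr hz)
  have hAz : A.leftQuotient z = A := (hmem A (by simp)).resolve_right fun h =>
    hB (hL.eq_of_leftQuotient_swap (hQ ▸ by simp) h hBz ▸ hA)
  exact ⟨hAz, hBz⟩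

theorem le_of_range_leftQuotient_eq_pair (hL : AcceptedByAperiodicDFA L)
    (hQ : range L.leftQuotient = {A, B}) (hA : [] ∈ A) (hB : [] ∉ B) : B ≤ A :=
  fun z (hz : z ∈ B) => show z ∈ A by
  rw [← nil_mem_leftQuotient_iff, (leftQuotient_eq_of_mem hL hQ hA hB hz).1]
  exact hA

theorem mul_le_of_range_leftQuotient_eq_pair (hL : AcceptedByAperiodicDFA L)
    (hQ : range L.leftQuotient = {A, B}) (hA : [] ∈ A) (hB : [] ∉ B) (X : Language σ) :
    X * B ≤ L :=
  fun x (hx : x ∈ X * B) => show x ∈ L by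
  obtain ⟨w, -, z, hz, rfl⟩ := mem_mul.mp hx
  rw [← nil_mem_leftQuotient_iff, leftQuotient_append]
  rcases leftQuotient_eq_or_eq hQ w with hw | hw <;> rw [hw]
  · rwa [(leftQuotient_eq_of_mem hL hQ hA hB hz).1]
  · rwa [(leftQuotient_eq_of_mem hL hQ hA hB hz).2]

theorem mem_leftQuotient_mul {x : List σ} :
    x ∈ (K * L).leftQuotient w ↔
      x ∈ K.leftQuotient w * L ∨ ∃ p s, p ++ s = w ∧ p ∈ K ∧ x ∈ L.leftQuotient s := by
  simp only [mem_leftQuotient, mem_mul]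
  constructor
  · rintro ⟨u, hu, z, hz, huz⟩
    rcases List.append_eq_append_iff.mp huz with ⟨s, rfl, rfl⟩ | ⟨c, rfl, rfl⟩
    · exact .inr ⟨u, s, rfl, hu, hz⟩
    · exact .inl ⟨c, hu, z, hz, rfl⟩
  · rintro (⟨c, hc, z, hz, rfl⟩ | ⟨p, s, rfl, hp, hs⟩)
    · exact ⟨w ++ c, hc, z, hz, by simp⟩
    · exact ⟨p, hp, s ++ x, hs, by simp⟩

theorem leftQuotient_mul_of_forall_not_mem (h : ∀ p s, p ++ s = w → p ∉ K) :
    (K * L).leftQuotient w = K.leftQuotient w * L := by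
  ext x
  rw [mem_leftQuotient_mul]
  exact or_iff_left fun ⟨p, s, hps, hp, _⟩ => h p s hps hp

theorem leftQuotient_mul_eq_add {U : Language σ}
    (hle : ∀ p s, p ++ s = w → p ∈ K → L.leftQuotient s ≤ U)
    (hex : ∃ p s, p ++ s = w ∧ p ∈ K ∧ L.leftQuotient s = U) :
    (K * L).leftQuotient w = K.leftQuotient w * L + U := by
  ext x
  rw [mem_leftQuotient_mul, mem_add]
  refine or_congr_right ⟨fun ⟨p, s, hps, hp, hx⟩ => hle p s hps hp hx, fun hx => ?_⟩
  obtain ⟨p, s, hps, hp, rfl⟩ := hex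
  exact ⟨p, s, hps, hp, hx⟩

theorem le_mul_of_nil_mem {X : Language σ} (hX : [] ∈ X) : L ≤ X * L :=
  fun z (hz : z ∈ L) => mem_mul.mpr ⟨[], hX, z, hz, rfl⟩

def concatQuotientCandidates (K L L' : Language σ) : Set (Language σ) :=
  (· * L) '' range K.leftQuotient ∪
    ((· * L + L) '' {X ∈ range K.leftQuotient | [] ∉ X} ∪
      (· * L + L') '' {X ∈ range K.leftQuotient | [] ∉ X})

theorem ncard_concatQuotientCandidates_le (hfin : (range K.leftQuotient).Finite) (hw : w ∈ K)
    (L L' : Language σ) :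
    (concatQuotientCandidates K L L').Finite ∧
      (concatQuotientCandidates K L L').ncard ≤ 3 * (range K.leftQuotient).ncard - 2 := by
  set N := {X ∈ range K.leftQuotient | [] ∉ X}
  have hNfin : N.Finite := hfin.subset (sep_subset _ _)
  have hN : N.ncard < (range K.leftQuotient).ncard := ncard_lt_ncard
    ⟨sep_subset _ _, fun h => (h (mem_range_self w)).2 (nil_mem_leftQuotient_iff.mpr hw)⟩ hfin
  refine ⟨(hfin.image _).union ((hNfin.image _).union (hNfin.image _)), ?_⟩
  calc (concatQuotientCandidates K L L').ncard
      ≤ ((· * L) '' range K.leftQuotient).ncard +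
          (((· * L + L) '' N).ncard + ((· * L + L') '' N).ncard) :=
        (ncard_union_le _ _).trans (Nat.add_le_add_left (ncard_union_le _ _) _)
    _ ≤ (range K.leftQuotient).ncard + (N.ncard + N.ncard) :=
        Nat.add_le_add (ncard_image_le hfin)
          (Nat.add_le_add (ncard_image_le hNfin) (ncard_image_le hNfin))
    _ ≤ 3 * (range K.leftQuotient).ncard - 2 := by omega

theorem leftQuotient_mul_mem_candidates_of_le {L' : Language σ}
    (hQ : range L.leftQuotient = {L, L'}) (hL' : L' ≤ L) (w : List σ) :
    (K * L).leftQuotient w ∈ concatQuotientCandidates K L L' := by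
  have hsplit := leftQuotient_eq_or_eq hQ
  by_cases hLsplit : ∃ p s, p ++ s = w ∧ p ∈ K ∧ L.leftQuotient s = L
  · have hval : (K * L).leftQuotient w = K.leftQuotient w * L + L :=
      leftQuotient_mul_eq_add (fun _ s _ _ => (hsplit s).elim le_of_eq fun h => h.le.trans hL')
        hLsplit
    by_cases hw : [] ∈ K.leftQuotient w
    · refine .inl ⟨K.leftQuotient w, mem_range_self w, ?_⟩
      rw [hval, add_eq_sup, sup_eq_left.mpr (le_mul_of_nil_mem hw)]
    · exact .inr (.inl ⟨K.leftQuotient w, ⟨mem_range_self w, hw⟩, hval.symm⟩)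
  · have hsplit' : ∀ p s, p ++ s = w → p ∈ K → L.leftQuotient s = L' := fun p s hps hp =>
      (hsplit s).resolve_left fun h => hLsplit ⟨p, s, hps, hp, h⟩
    by_cases hany : ∃ p s, p ++ s = w ∧ p ∈ K
    · obtain ⟨p, s, hps, hp⟩ := hany
      have hval : (K * L).leftQuotient w = K.leftQuotient w * L + L' :=
        leftQuotient_mul_eq_add (fun p s hps hp => (hsplit' p s hps hp).le)
          ⟨p, s, hps, hp, hsplit' p s hps hp⟩
      have hw : [] ∉ K.leftQuotient w := fun h =>
        hLsplit ⟨w, [], w.append_nil, nil_mem_leftQuotient_iff.mp h, leftQuotient_nil L⟩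
      exact .inr (.inr ⟨K.leftQuotient w, ⟨mem_range_self w, hw⟩, hval.symm⟩)
    · exact .inl ⟨K.leftQuotient w, mem_range_self w,
        (leftQuotient_mul_of_forall_not_mem fun p s hps hp => hany ⟨p, s, hps, hp⟩).symm⟩

theorem leftQuotient_mul_mem_candidates_of_mul_le {L' : Language σ} {v : List σ}
    (hQ : range L.leftQuotient = {L, L'}) (hL' : L ≤ L') (hmul : ∀ X : Language σ, X * L ≤ L)
    (hv : v ∉ K) (w : List σ) :
    (K * L).leftQuotient w ∈ concatQuotientCandidates K L L' := by
  have hsplit := leftQuotient_eq_or_eq hQ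
  by_cases hany : ∃ p s, p ++ s = w ∧ p ∈ K
  · obtain ⟨U, hU, hval⟩ : ∃ U, (U = L ∨ U = L') ∧
        (K * L).leftQuotient w = K.leftQuotient w * L + U := by
      by_cases hL'split : ∃ p s, p ++ s = w ∧ p ∈ K ∧ L.leftQuotient s = L'
      · exact ⟨L', .inr rfl, leftQuotient_mul_eq_add
          (fun _ s _ _ => (hsplit s).elim (fun h => h.le.trans hL') le_of_eq) hL'split⟩
      · have hsplit' : ∀ p s, p ++ s = w → p ∈ K → L.leftQuotient s = L := fun p s hps hp =>
          (hsplit s).resolve_right fun h => hL'split ⟨p, s, hps, hp, h⟩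
        obtain ⟨p, s, hps, hp⟩ := hany
        exact ⟨L, .inl rfl, leftQuotient_mul_eq_add (fun p s hps hp => (hsplit' p s hps hp).le)
          ⟨p, s, hps, hp, hsplit' p s hps hp⟩⟩
    have hLU : L ≤ U := hU.elim ge_of_eq fun h => hL'.trans h.ge
    have hval' : (K * L).leftQuotient w = K.leftQuotient v * L + U := by
      rw [hval, add_eq_sup, add_eq_sup, sup_eq_right.mpr ((hmul _).trans hLU),
        sup_eq_right.mpr ((hmul _).trans hLU)]
    have hv' : K.leftQuotient v ∈ {X ∈ range K.leftQuotient | [] ∉ X} :=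
      ⟨mem_range_self v, fun h => hv (nil_mem_leftQuotient_iff.mp h)⟩
    rcases hU with rfl | rfl
    · exact .inr (.inl ⟨_, hv', hval'.symm⟩)
    · exact .inr (.inr ⟨_, hv', hval'.symm⟩)
  · exact .inl ⟨K.leftQuotient w, mem_range_self w,
      (leftQuotient_mul_of_forall_not_mem fun p s hps hp => hany ⟨p, s, hps, hp⟩).symm⟩

theorem ncard_range_leftQuotient_mul_le (hL : AcceptedByAperiodicDFA L)
    (hK : 2 ≤ (range K.leftQuotient).ncard) (hL2 : (range L.leftQuotient).ncard = 2) :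
    (range (K * L).leftQuotient).Finite ∧
      (range (K * L).leftQuotient).ncard ≤ 3 * (range K.leftQuotient).ncard - 2 := by
  obtain ⟨⟨w₁, hw₁⟩, ⟨w₀, hw₀⟩⟩ := exists_mem_and_exists_not_mem hK
  have hfin : (range K.leftQuotient).Finite := finite_of_ncard_pos (by omega)
  obtain ⟨L', hLL', hQ⟩ := exists_range_leftQuotient_eq_pair hL2
  have hsub : range (K * L).leftQuotient ⊆ concatQuotientCandidates K L L' := by
    rintro _ ⟨w, rfl⟩
    have hiff := nil_mem_iff_nil_not_mem hQ hLL'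
    by_cases hε : [] ∈ L
    · have hε' : [] ∉ L' := hiff.mp hε
      exact leftQuotient_mul_mem_candidates_of_le hQ
        (le_of_range_leftQuotient_eq_pair hL hQ hε hε') w
    · have hε' : [] ∈ L' := not_imp_comm.mp hiff.mpr hε
      have hQ' := hQ.trans (pair_comm L L')
      exact leftQuotient_mul_mem_candidates_of_mul_le hQ
        (le_of_range_leftQuotient_eq_pair hL hQ' hε' hε)
        (mul_le_of_range_leftQuotient_eq_pair hL hQ' hε' hε) hw₀ w
  obtain ⟨hCfin, hCcard⟩ := ncard_concatQuotientCandidates_le hfin hw₁ L L'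
  exact ⟨hCfin.subset hsub, (ncard_le_ncard hsub hCfin).trans hCcard⟩

end Language

theorem leftQuotients_eq_range (M : Set (List σ)) :
    LeftQuotients M = range (Language.leftQuotient M) := by
  ext S
  exact exists_congr fun w => eq_comm

end

theorem statement17_general {σ : Type*} (K L : Set (List σ)) (m : ℕ) (hm : 2 ≤ m)
    (hL : AcceptedByAperiodicDFA L)
    (hKm : (LeftQuotients K).ncard = m) (hL2 : (LeftQuotients L).ncard = 2) :
    (LeftQuotients (Set.image2 (· ++ ·) K L)).Finite ∧
    (LeftQuotients (Set.image2 (· ++ ·) K L)).ncard ≤ 3 * m - 2 := by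
  rw [leftQuotients_eq_range] at hKm hL2 ⊢
  subst hKm
  exact Language.ncard_range_leftQuotient_mul_le hL hm hL2

/-- If `K` and `L` are star-free languages with quotient complexities `m ≥ 2` and `2`
respectively, then the quotient complexity of the concatenation `KL` is at most
`3m − 2`. -/
theorem statement17 {σ : Type*} [Finite σ] (K L : Set (List σ)) (m : ℕ) (hm : 2 ≤ m)
    (hK : AcceptedByAperiodicDFA K) (hL : AcceptedByAperiodicDFA L)
    (hKm : (LeftQuotients K).ncard = m) (hL2 : (LeftQuotients L).ncard = 2) :
    (LeftQuotients (Set.image2 (· ++ ·) K L)).Finite ∧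
    (LeftQuotients (Set.image2 (· ++ ·) K L)).ncard ≤ 3 * m - 2 :=
  statement17_general K L m hm hL hKm hL2
end

section
/- For every n ≥ 1 and k ≥ 0, the number of k-partial transformations of Q_n = {0,…,n−1} consistent with the monoid of all monotone transformations of Q_n equals C(2n−1, n) + Σ_{h=0}^{n−1} k^{n−h} · C(n, h) · C(n+h−1, h), where C denotes the binomial coefficient. -/
/-!
A `k`-partial transformation `g` of `Q_n` is consistent with the monotone maps exactly when it is
monotone on the set `s` of points where it takes a value in `Q_n`: such a partial map extends to the
monotone map `q ↦ sup {g p | p ≤ q, p ∈ s}`. So a consistent `g` amounts to a subset `s`, a monotone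
map `s → Q_n` and an arbitrary map from the complement of `s` to the `k` boxes. A monotone map from
an `h`-element chain to `Q_n` is determined by its multiset of values, and every `h`-multiset arises
(sort it), so there are `C(n + h - 1, h)` of them (stars and bars). Summing over `s` by its size `h`
gives the formula, the term `h = n` being `C(2n - 1, n)`.
-/

/-- A `k`-partial transformation `g` of `Q` (a map `Q → Q ⊕ {□1,…,□k}`) is consistent
with a set `S` of transformations of `Q` if some `t ∈ S` agrees with `g` wherever `g`
takes a value in `Q`. -/
def ConsistentWith {Q : Type*} (S : Set (Q → Q)) {k : ℕ} (g : Q → Q ⊕ Fin k) : Prop :=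
  ∃ t ∈ S, ∀ (q x : Q), g q = Sum.inl x → t q = x

open Finset

section MonotoneMaps

variable {α β γ : Type*}

theorem natCard_monotone_eq_multichoose [Fintype α] [LinearOrder α] [LinearOrder β] :
    Nat.card {f : α → β // Monotone f} = (Nat.card β).multichoose (Fintype.card α) := by
  let e : Fin (Fintype.card α) ≃o α := Fintype.orderIsoFinOfCardEq α rfl
  let toSym (f : {f : α → β // Monotone f}) : Sym β (Fintype.card α) :=
    ⟨List.ofFn (f.1 ∘ e), by simp⟩
  have hinj : Function.Injective toSym := by
    intro f g hfg
    have hsorted (f : {f : α → β // Monotone f}) : (List.ofFn (f.1 ∘ e)).SortedLE :=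
      (f.2.comp e.monotone).sortedLE_ofFn
    have hperm := Multiset.coe_eq_coe.mp (congrArg Subtype.val hfg)
    have := List.ofFn_injective (hperm.eq_of_sortedLE (hsorted f) (hsorted g))
    exact Subtype.ext (e.surjective.injective_comp_right this)
  have hsurj : Function.Surjective toSym := by
    intro s
    set l := s.1.sort
    have hl : l.length = Fintype.card α := by simp [l]
    refine ⟨⟨fun a => l[e.symm a], fun a b hab => ?_⟩, ?_⟩
    · exact (Multiset.pairwise_sort _ _).sortedLE.getElem_le_getElem_of_le (by simpa using hab)
    · have hofFn : List.ofFn (fun i : Fin (Fintype.card α) => l[i]) = l :=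
        List.ext_getElem (by simp [hl]) (by simp)
      apply Subtype.ext
      simp only [toSym, Function.comp_def, OrderIso.symm_apply_apply, hofFn]
      exact Multiset.sort_eq _ _
  rw [Nat.card_congr (Equiv.ofBijective toSym ⟨hinj, hsurj⟩), Sym.natCard_sym_eq_multichoose]

def MonotoneOnInl [Preorder α] [Preorder β] (g : α → β ⊕ γ) : Prop :=
  ∀ ⦃p q : α⦄ ⦃x y : β⦄, p ≤ q → g p = .inl x → g q = .inl y → x ≤ y

theorem MonotoneOnInl.exists_monotone_extension [Preorder α] [Fintype α] [SemilatticeSup β]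
    [OrderBot β] {g : α → β ⊕ γ} (hg : MonotoneOnInl g) :
    ∃ t : α → β, Monotone t ∧ ∀ a x, g a = .inl x → t a = x := by
  classical
  let v (p : α) : β := (g p).elim id fun _ => ⊥
  refine ⟨fun a => ({p | p ≤ a} : Finset α).sup v, ?_, ?_⟩
  · intro a b hab
    exact sup_mono fun p hp => by simp only [mem_filter_univ] at hp ⊢; exact hp.trans hab
  · intro a x hx
    have hva : v a = x := by simp [v, hx]
    refine le_antisymm (Finset.sup_le fun p hp => ?_) (hva ▸ le_sup (by simp))
    rcases hgp : g p with y | _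
    · simpa [v, hgp] using hg (by simpa using hp) hgp hx
    · simp [v, hgp]

theorem consistentWith_monotone_iff [Fintype α] [SemilatticeSup α] [OrderBot α] {k : ℕ}
    (g : α → α ⊕ Fin k) : ConsistentWith {t | Monotone t} g ↔ MonotoneOnInl g := by
  constructor
  · rintro ⟨t, ht, htg⟩ p q x y hpq hx hy
    rw [← htg p x hx, ← htg q y hy]
    exact ht hpq
  · exact MonotoneOnInl.exists_monotone_extension

section Piecewise

variable [DecidableEq α] (s : Finset α) (f : s → β) (h : {a // a ∉ s} → γ)

def sumPiecewise : α → β ⊕ γ :=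
  fun a => if ha : a ∈ s then .inl (f ⟨a, ha⟩) else .inr (h ⟨a, ha⟩)

theorem isLeft_sumPiecewise (a : α) : (sumPiecewise s f h a).isLeft ↔ a ∈ s := by
  unfold sumPiecewise; split_ifs with ha <;> simp [ha]

theorem monotoneOnInl_sumPiecewise_iff [Preorder α] [Preorder β] :
    MonotoneOnInl (sumPiecewise s f h) ↔ Monotone f := by
  constructor
  · rintro hmono ⟨p, hp⟩ ⟨q, hq⟩ hpq
    exact hmono (show p ≤ q from hpq) (by simp [sumPiecewise, hp]) (by simp [sumPiecewise, hq])
  · intro hf p q x y hpq hx hy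
    unfold sumPiecewise at hx hy
    split_ifs at hx hy with hp hq
    cases hx; cases hy
    exact hf (show (⟨p, hp⟩ : s) ≤ ⟨q, hq⟩ from hpq)

end Piecewise

theorem bijective_sumPiecewise_monotone [DecidableEq α] [Fintype α] [Preorder α] [Preorder β] :
    Function.Bijective fun x : Σ s : Finset α, {f : s → β // Monotone f} × ({a // a ∉ s} → γ) =>
      (⟨sumPiecewise x.1 x.2.1 x.2.2, (monotoneOnInl_sumPiecewise_iff _ _ _).mpr x.2.1.2⟩ :
        {g : α → β ⊕ γ // MonotoneOnInl g}) := by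
  constructor
  · rintro ⟨s, f, h⟩ ⟨s', f', h'⟩ hval
    have hval (a : α) := congrFun (Subtype.ext_iff.mp hval) a
    obtain rfl : s = s' := by
      ext a
      rw [← isLeft_sumPiecewise s f.1 h, ← isLeft_sumPiecewise s' f'.1 h']
      exact iff_of_eq (congrArg (·.isLeft = true) (hval a))
    have hf : f = f' := Subtype.ext <| funext fun ⟨a, ha⟩ => by
      simpa [sumPiecewise, ha] using hval a
    have hh : h = h' := funext fun ⟨a, ha⟩ => by
      simpa [sumPiecewise, ha] using hval a
    rw [hf, hh]
  · rintro ⟨g, hg⟩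
    let s : Finset α := {a | (g a).isLeft}
    let f (a : s) : β := (g a).getLeft (mem_filter.mp a.2).2
    let h (a : {a // a ∉ s}) : γ := (g a).getRight (by simpa [s] using a.2)
    have hfh : sumPiecewise s f h = g := funext fun a => by
      by_cases ha : (g a).isLeft <;> simp [sumPiecewise, s, f, h, ha]
    have hf : Monotone f := (monotoneOnInl_sumPiecewise_iff s f h).mp (hfh ▸ hg)
    exact ⟨⟨s, ⟨f, hf⟩, h⟩, Subtype.ext hfh⟩

theorem natCard_monotoneOnInl_eq_sum [DecidableEq α] [Fintype α] [Preorder α] [Preorder β]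
    [Finite β] [Finite γ] :
    Nat.card {g : α → β ⊕ γ // MonotoneOnInl g} =
      ∑ s : Finset α, Nat.card {f : s → β // Monotone f} * Nat.card γ ^ (Fintype.card α - #s) := by
  rw [← Nat.card_congr (Equiv.ofBijective _ bijective_sumPiecewise_monotone), Nat.card_sigma]
  refine sum_congr rfl fun s _ => ?_
  rw [Nat.card_prod, Nat.card_fun]
  simp

end MonotoneMaps

/-- For every `n ≥ 1` and `k ≥ 0`, the number of `k`-partial transformations of
`Q_n = {0,…,n−1}` consistent with the monoid of all monotone transformations of `Q_n`
equals `C(2n−1, n) + Σ_{h=0}^{n−1} k^{n−h}·C(n, h)·C(n+h−1, h)`. -/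
theorem statement19 (n : ℕ) (hn : 1 ≤ n) (k : ℕ) :
    Nat.card {g : Fin n → Fin n ⊕ Fin k // ConsistentWith {t : Fin n → Fin n | Monotone t} g} =
      Nat.choose (2 * n - 1) n +
        ∑ h ∈ Finset.range n, k ^ (n - h) * Nat.choose n h * Nat.choose (n + h - 1) h := by
  have : NeZero n := ⟨by omega⟩
  have hmono (s : Finset (Fin n)) : Nat.card {f : s → Fin n // Monotone f} = n.multichoose #s := by
    simpa using natCard_monotone_eq_multichoose (α := s) (β := Fin n)
  rw [Nat.card_congr (Equiv.subtypeEquivRight consistentWith_monotone_iff),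
    natCard_monotoneOnInl_eq_sum]
  simp only [hmono, Nat.card_eq_fintype_card, Fintype.card_fin]
  rw [← powerset_univ, sum_powerset_apply_card fun d => n.multichoose d * k ^ (n - d), card_univ,
    Fintype.card_fin, sum_range_succ, add_comm]
  congr 1
  · simp [Nat.multichoose_eq, two_mul]
  · refine sum_congr rfl fun h _ => ?_
    rw [smul_eq_mul, Nat.multichoose_eq]
    ring
end
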